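/- arXiv:2109.09493 — 8 statements merged into one kernel-verified Lean document; each statement's English description precedes it below -/
import Mathlib

section
/- If Assumption 1 holds and z = (x, w) is a solution of the layered networked SIWS model with x_i(0) ∈ [0,1] for all i ∈ {1,…,n} and w_j(0) ≥ 0 for all j ∈ {1,…,m}, then for every t ≥ 0 one has x_i(t) ∈ [0,1] for all i and w_j(t) ≥ 0 for all j; that is, the set 𝒟 is positively invariant for the SIWS dynamics. -/
open Matrix

variable {n m : ℕ}

/-- The block matrix `B_f = [[B, B_w],[C_w, A_w − diag A_w]]`. -/
def BfM (B : Matrix (Fin n) (Fin n) ℝ) (Bw : Matrix (Fin n) (Fin m) ℝ)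
    (Cw : Matrix (Fin m) (Fin n) ℝ) (Aw : Matrix (Fin m) (Fin m) ℝ) :
    Matrix (Fin n ⊕ Fin m) (Fin n ⊕ Fin m) ℝ :=
  Matrix.fromBlocks B Bw Cw (Aw - Matrix.diagonal (fun j => Aw j j))

/-- The block diagonal matrix `D_f = blockdiag(D, D_w − diag A_w)`. -/
def DfM (δ : Fin n → ℝ) (δw : Fin m → ℝ) (Aw : Matrix (Fin m) (Fin m) ℝ) :
    Matrix (Fin n ⊕ Fin m) (Fin n ⊕ Fin m) ℝ :=
  Matrix.fromBlocks (Matrix.diagonal δ) 0 0 (Matrix.diagonal (fun j => δw j - Aw j j))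

/-- `X(z) = diag(x_1,…,x_n,0,…,0)` for `z = (x,w)`. -/
def XzM (z : Fin n ⊕ Fin m → ℝ) :
    Matrix (Fin n ⊕ Fin m) (Fin n ⊕ Fin m) ℝ :=
  Matrix.diagonal (Sum.elim (fun a => z (Sum.inl a)) (fun _ => (0:ℝ)))

/-- A (nonnegative) square matrix is irreducible if for every pair of indices `i, j`
there is `k ≥ 1` with `(M^k) i j > 0`. -/
def MatIrred {N : Type*} [Fintype N] [DecidableEq N] (M : Matrix N N ℝ) : Prop :=
  ∀ i j, ∃ k : ℕ, 1 ≤ k ∧ 0 < (M ^ k) i j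

/-- The spectral radius of a real matrix: the supremum of the moduli of its
complex eigenvalues. -/
noncomputable def specRad {N : Type*} [Fintype N] [DecidableEq N] (M : Matrix N N ℝ) : ENNReal :=
  spectralRadius ℂ (M.map (algebraMap ℝ ℂ))

/-!
Along a solution, the squared Euclidean distance to `𝒟`,
`V(z) = ∑ₖ ((zₖ)⁻)² + ∑ᵢ ((xᵢ - 1)⁺)²`, is `C¹`, and since `B_f ≥ 0` and `D_f ≥ 0` it satisfies
`V' ≤ K V` on every compact time interval (where `z` is bounded): a coordinate below `0` is only
pushed down by the other coordinates below `0`, and for `xᵢ > 1` the factor `1 - xᵢ < 0` turns the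
infection term into a restoring force unless some coordinate is negative. As `V(z(0)) = 0`,
Grönwall's inequality gives `V ≡ 0`.
-/

open Filter Asymptotics Topology

theorem hasDerivAt_posPart_sq (s : ℝ) : HasDerivAt (fun x : ℝ => x⁺ ^ 2) (2 * s⁺) s := by
  rw [hasDerivAt_iff_isLittleO]
  refine IsBigO.trans_isLittleO (g := fun x => ‖x - s‖ ^ 2) ?_ (isLittleO_pow_sub_sub s one_lt_two)
  refine IsBigO.of_bound 1 (Eventually.of_forall fun x => ?_)
  simp only [Real.norm_eq_abs, abs_pow, sq_abs, one_mul, smul_eq_mul, posPart_def]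
  rw [abs_le]
  constructor <;> rcases le_total x 0 with hx | hx <;> rcases le_total s 0 with hs | hs <;>
    simp only [max_eq_left, max_eq_right, hx, hs] <;> nlinarith

theorem le_zero_of_deriv_right_le_mul_self {f f' : ℝ → ℝ} {K a b : ℝ}
    (hf : ContinuousOn f (Set.Icc a b))
    (hf' : ∀ x ∈ Set.Ico a b, HasDerivWithinAt f (f' x) (Set.Ici x) x)
    (ha : f a ≤ 0) (bound : ∀ x ∈ Set.Ico a b, f' x ≤ K * f x) :
    ∀ x ∈ Set.Icc a b, f x ≤ 0 := by
  intro x hx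
  have hslope : ∀ x ∈ Set.Ico a b, ∀ r, f' x < r → ∃ᶠ z in 𝓝[>] x, (z - x)⁻¹ * (f z - f x) < r :=
    fun x hx r hr => ((hf' x hx).liminf_right_slope_le hr).mono fun z hz => by
      rwa [slope_def_field, div_eq_inv_mul] at hz
  simpa [gronwallBound_ε0_δ0] using le_gronwallBound_of_liminf_deriv_right_le hf hslope ha
    (fun y hy => (bound y hy).trans_eq (add_zero _).symm) x hx

theorem neg_mulVec_apply_le {ι' κ' : Type*} [Fintype κ'] {A : Matrix ι' κ' ℝ} {a : ℝ}
    (hA0 : ∀ k l, 0 ≤ A k l) (hAa : ∀ k l, A k l ≤ a) (v : κ' → ℝ) (k : ι') :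
    -(A *ᵥ v) k ≤ a * ∑ l, (v l)⁻ := by
  rw [mulVec, dotProduct, ← Finset.sum_neg_distrib, Finset.mul_sum]
  gcongr with l
  calc -(A k l * v l) = A k l * -v l := by ring
    _ ≤ A k l * (v l)⁻ := mul_le_mul_of_nonneg_left (neg_le_negPart _) (hA0 k l)
    _ ≤ a * (v l)⁻ := mul_le_mul_of_nonneg_right (hAa k l) (negPart_nonneg _)

theorem mulVec_neg_diagonal_add_one_sub_diagonal_mul_apply {ι' : Type*} [Fintype ι']
    [DecidableEq ι'] (d x : ι' → ℝ) (A : Matrix ι' ι' ℝ) (v : ι' → ℝ) (k : ι') :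
    ((-diagonal d + (1 - diagonal x) * A) *ᵥ v) k = -d k * v k + (1 - x k) * (A *ᵥ v) k := by
  simp only [add_mulVec, neg_mulVec, ← mulVec_mulVec, sub_mulVec, one_mulVec, mulVec_diagonal,
    Pi.add_apply, Pi.neg_apply, Pi.sub_apply]
  ring

theorem neg_negPart_mul_le {x d c r C R : ℝ} (hd : 0 ≤ d) (hc : x < 0 → 0 ≤ c ∧ c ≤ C)
    (hr : -r ≤ R) (hR : 0 ≤ R) : -(x⁻ * (-d * x + c * r)) ≤ C * x⁻ * R := by
  rcases le_or_gt 0 x with hx | hx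
  · simp [negPart_eq_zero.2 hx]
  · obtain ⟨hc0, hcC⟩ := hc hx
    rw [negPart_eq_neg.2 hx.le]
    nlinarith [mul_nonneg hd (sq_nonneg x),
      mul_nonneg (mul_nonneg (neg_nonneg.2 hx.le) hc0) (by linarith : 0 ≤ R + r),
      mul_nonneg (mul_nonneg (neg_nonneg.2 hx.le) (sub_nonneg.2 hcC)) hR]

theorem posPart_sub_one_mul_le {x d r R : ℝ} (hd : 0 ≤ d) (hr : -r ≤ R) :
    (x - 1)⁺ * (-d * x + (1 - x) * r) ≤ (x - 1)⁺ ^ 2 * R := by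
  rcases le_or_gt x 1 with hx | hx
  · simp [posPart_eq_zero.2 (sub_nonpos.2 hx)]
  · rw [posPart_eq_self.2 (sub_nonneg.2 hx.le)]
    nlinarith [mul_nonneg (sq_nonneg (x - 1)) (by linarith : 0 ≤ R + r),
      mul_nonneg (mul_nonneg hd (sub_nonneg.2 hx.le)) (by linarith : (0 : ℝ) ≤ x)]

section DistSqToD

variable {ι κ : Type*} [Fintype ι] [Fintype κ]

def distSqToD (v : ι ⊕ κ → ℝ) : ℝ :=
  ∑ k, (v k)⁻ ^ 2 + ∑ i, (v (.inl i) - 1)⁺ ^ 2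

theorem distSqToD_nonneg (v : ι ⊕ κ → ℝ) : 0 ≤ distSqToD v := by
  unfold distSqToD; positivity

theorem distSqToD_eq_zero_iff {v : ι ⊕ κ → ℝ} :
    distSqToD v = 0 ↔ (∀ i, v (.inl i) ∈ Set.Icc (0 : ℝ) 1) ∧ ∀ j, 0 ≤ v (.inr j) := by
  rw [distSqToD, add_eq_zero_iff_of_nonneg (by positivity) (by positivity),
    Fintype.sum_eq_zero_iff_of_nonneg (fun _ => by positivity),
    Fintype.sum_eq_zero_iff_of_nonneg (fun _ => by positivity)]
  simp only [funext_iff, Pi.zero_apply, sq_eq_zero_iff, negPart_eq_zero, posPart_eq_zero,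
    sub_nonpos, Sum.forall, Set.mem_Icc, forall_and]
  tauto

theorem HasDerivAt.distSqToD {z : ℝ → ι ⊕ κ → ℝ} {z' : ι ⊕ κ → ℝ} {t : ℝ}
    (hz : HasDerivAt z z' t) :
    HasDerivAt (fun s => distSqToD (z s))
      (∑ k, -(2 * (z t k)⁻ * z' k) + ∑ i, 2 * (z t (.inl i) - 1)⁺ * z' (.inl i)) t := by
  have hcomp k : HasDerivAt (fun s => z s k) (z' k) t := hasDerivAt_pi.1 hz k
  refine (HasDerivAt.fun_sum fun k _ => ?_).add (HasDerivAt.fun_sum fun i _ => ?_)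
  · simpa [Function.comp_def, mul_neg] using (hasDerivAt_posPart_sq _).comp t (hcomp k).neg
  · simpa [Function.comp_def] using
      (hasDerivAt_posPart_sq _).comp t ((hcomp (.inl i)).sub_const 1)

theorem deriv_distSqToD_le [DecidableEq ι] [DecidableEq κ] {d : ι ⊕ κ → ℝ} (hd : ∀ k, 0 ≤ d k)
    {A : Matrix (ι ⊕ κ) (ι ⊕ κ) ℝ} {a M : ℝ} (hA0 : ∀ k l, 0 ≤ A k l) (hAa : ∀ k l, A k l ≤ a)
    (ha : 0 ≤ a) (hM : 0 ≤ M) {v : ι ⊕ κ → ℝ} (hvM : ∀ k, |v k| ≤ M) :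
    let F := (-diagonal d + (1 - diagonal (Sum.elim (fun i => v (.inl i)) fun _ => 0)) * A) *ᵥ v
    ∑ k, -(2 * (v k)⁻ * F k) + ∑ i, 2 * (v (.inl i) - 1)⁺ * F (.inl i) ≤
      2 * a * Fintype.card (ι ⊕ κ) * (1 + M) * distSqToD v := by
  intro F
  set N : ℝ := (Fintype.card (ι ⊕ κ) : ℝ)
  set S := ∑ l, (v l)⁻
  set c : ι ⊕ κ → ℝ := Sum.elim (fun i => v (.inl i)) fun _ => 0
  have hF k : F k = -d k * v k + (1 - c k) * (A *ᵥ v) k :=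
    mulVec_neg_diagonal_add_one_sub_diagonal_mul_apply _ _ _ _ _
  have hS0 : 0 ≤ S := Finset.sum_nonneg fun l _ => negPart_nonneg _
  have hSM : S ≤ N * M := by
    calc S ≤ ∑ _l : ι ⊕ κ, M :=
          Finset.sum_le_sum fun l _ => (max_le (neg_le_abs _) (abs_nonneg _)).trans (hvM l)
      _ = N * M := by simp [N]
  have hS2 : S ^ 2 ≤ N * ∑ k, (v k)⁻ ^ 2 := by
    simpa only [Finset.card_univ] using
      sq_sum_le_card_mul_sum_sq (s := Finset.univ) (f := fun k => (v k)⁻)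
  have hr k : -(A *ᵥ v) k ≤ a * S := neg_mulVec_apply_le hA0 hAa v k
  have hlower k : -(2 * (v k)⁻ * F k) ≤ 2 * (1 + M) * (a * S) * (v k)⁻ := by
    have hc : v k < 0 → 0 ≤ 1 - c k ∧ 1 - c k ≤ 1 + M := by
      have := (neg_le_abs (v k)).trans (hvM k)
      rcases k with i | j <;> intro hk <;> simp only [c, Sum.elim_inl, Sum.elim_inr, sub_zero] <;>
        constructor <;> linarith
    have := neg_negPart_mul_le (hd k) hc (hr k) (mul_nonneg ha hS0)
    rw [hF]; linarith
  have hupper i : 2 * (v (.inl i) - 1)⁺ * F (.inl i) ≤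
      2 * (a * S) * (v (.inl i) - 1)⁺ ^ 2 := by
    have := posPart_sub_one_mul_le (x := v (.inl i)) (hd (.inl i)) (hr (.inl i))
    rw [hF]; simp only [c, Sum.elim_inl]; linarith
  set Q := ∑ i, (v (.inl i) - 1)⁺ ^ 2
  have hQ0 : 0 ≤ Q := by positivity
  calc _ ≤ ∑ k, 2 * (1 + M) * (a * S) * (v k)⁻ +
        ∑ i, 2 * (a * S) * (v (.inl i) - 1)⁺ ^ 2 :=
        add_le_add (Finset.sum_le_sum fun k _ => hlower k) (Finset.sum_le_sum fun i _ => hupper i)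
    _ = 2 * (1 + M) * a * S ^ 2 + 2 * a * S * Q := by
        rw [← Finset.mul_sum, ← Finset.mul_sum]; ring
    _ ≤ 2 * (1 + M) * a * (N * ∑ k, (v k)⁻ ^ 2) + 2 * a * (N * M) * Q := by
        gcongr
    _ ≤ 2 * a * N * (1 + M) * distSqToD v := by
        rw [distSqToD]
        nlinarith [mul_nonneg (mul_nonneg ha (Nat.cast_nonneg _ : (0 : ℝ) ≤ N)) hQ0]

end DistSqToD

theorem DfM_eq_diagonal (δ : Fin n → ℝ) (δw : Fin m → ℝ) (Aw : Matrix (Fin m) (Fin m) ℝ) :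
    DfM δ δw Aw = diagonal (Sum.elim δ fun j => δw j - Aw j j) :=
  fromBlocks_diagonal _ _

theorem siws_D_positively_invariant_general {n m : ℕ}
    (δ : Fin n → ℝ) (δw : Fin m → ℝ)
    (B : Matrix (Fin n) (Fin n) ℝ) (Bw : Matrix (Fin n) (Fin m) ℝ)
    (Cw : Matrix (Fin m) (Fin n) ℝ) (Aw : Matrix (Fin m) (Fin m) ℝ)
    (hBf : ∀ i j, 0 ≤ BfM B Bw Cw Aw i j)
    (hDf : ∀ i, 0 < DfM δ δw Aw i i)
    (z : ℝ → (Fin n ⊕ Fin m) → ℝ)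
    (hode : ∀ t : ℝ, 0 ≤ t →
      HasDerivAt z
        ((-(DfM δ δw Aw) +
          ((1 : Matrix (Fin n ⊕ Fin m) (Fin n ⊕ Fin m) ℝ) - XzM (z t)) * BfM B Bw Cw Aw) *ᵥ z t) t)
    (hx0 : ∀ i : Fin n, z 0 (Sum.inl i) ∈ Set.Icc (0:ℝ) 1)
    (hw0 : ∀ j : Fin m, 0 ≤ z 0 (Sum.inr j)) :
    ∀ t : ℝ, 0 ≤ t →
      (∀ i : Fin n, z t (Sum.inl i) ∈ Set.Icc (0:ℝ) 1) ∧
      (∀ j : Fin m, 0 ≤ z t (Sum.inr j)) := by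
  intro T hT
  rw [DfM_eq_diagonal] at hDf hode
  have hd k : 0 ≤ Sum.elim δ (fun j => δw j - Aw j j) k := by simpa using (hDf k).le
  set a := ∑ k, ∑ l, BfM B Bw Cw Aw k l
  have ha : 0 ≤ a := Finset.sum_nonneg fun k _ => Finset.sum_nonneg fun l _ => hBf k l
  have hBa k l : BfM B Bw Cw Aw k l ≤ a :=
    (Finset.single_le_sum (fun l _ => hBf k l) (Finset.mem_univ l)).trans
      (Finset.single_le_sum (fun k _ => Finset.sum_nonneg fun l _ => hBf k l) (Finset.mem_univ k))
  obtain ⟨M, hM⟩ := isCompact_Icc.exists_bound_of_continuousOn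
    fun t ht => (hode t ht.1).continuousAt.continuousWithinAt
  have hM0 : 0 ≤ M := (norm_nonneg _).trans (hM 0 ⟨le_rfl, hT⟩)
  have hdist := le_zero_of_deriv_right_le_mul_self (f := fun t => distSqToD (z t))
    (fun t ht => (hode t ht.1).distSqToD.continuousAt.continuousWithinAt)
    (fun t ht => (hode t ht.1).distSqToD.hasDerivWithinAt)
    (distSqToD_eq_zero_iff.2 ⟨hx0, hw0⟩).le
    (fun t ht => deriv_distSqToD_le hd hBf hBa ha hM0
      fun k => (norm_le_pi_norm (z t) k).trans (hM t (Set.Ico_subset_Icc_self ht)))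
    T ⟨hT, le_rfl⟩
  exact distSqToD_eq_zero_iff.1 (le_antisymm hdist (distSqToD_nonneg _))

/-- Positive invariance of `𝒟` for the layered networked SIWS model
under Assumption 1. -/
theorem siws_D_positively_invariant {n m : ℕ} (hn : 0 < n) (hm : 0 < m)
    (δ : Fin n → ℝ) (δw : Fin m → ℝ)
    (B : Matrix (Fin n) (Fin n) ℝ) (Bw : Matrix (Fin n) (Fin m) ℝ)
    (Cw : Matrix (Fin m) (Fin n) ℝ) (Aw : Matrix (Fin m) (Fin m) ℝ)
    (hBf : ∀ i j, 0 ≤ BfM B Bw Cw Aw i j)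
    (hDf : ∀ i, 0 < DfM δ δw Aw i i)
    (z : ℝ → (Fin n ⊕ Fin m) → ℝ) (hdiff : Differentiable ℝ z)
    (hode : ∀ t : ℝ, 0 ≤ t →
      HasDerivAt z
        ((-(DfM δ δw Aw) +
          ((1 : Matrix (Fin n ⊕ Fin m) (Fin n ⊕ Fin m) ℝ) - XzM (z t)) * BfM B Bw Cw Aw) *ᵥ z t) t)
    (hx0 : ∀ i : Fin n, z 0 (Sum.inl i) ∈ Set.Icc (0:ℝ) 1)
    (hw0 : ∀ j : Fin m, 0 ≤ z 0 (Sum.inr j)) :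
    ∀ t : ℝ, 0 ≤ t →
      (∀ i : Fin n, z t (Sum.inl i) ∈ Set.Icc (0:ℝ) 1) ∧
      (∀ j : Fin m, 0 ≤ z t (Sum.inr j)) :=
  siws_D_positively_invariant_general δ δw B Bw Cw Aw hBf hDf z hode hx0 hw0
end

section
/- Suppose Assumption 1 holds and B_f is irreducible. Then ρ(D_f^{-1}B_f) > ρ(D^{-1}B); that is, the basic reproduction number of the layered networked SIWS model strictly exceeds that of the networked SIS model (note that D^{-1}B is the top-left n×n principal submatrix of D_f^{-1}B_f). -/
open Matrix

variable {n m : ℕ}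

/-!
With `M = D_f⁻¹ B_f`, the matrix `D⁻¹ B` is the principal block of `M` on the first `n` indices,
and `M` is nonnegative and irreducible, so this is the strict monotonicity of the Perron root
under passing to a proper principal submatrix. If `D⁻¹ B z = μ z` with `|μ| = ρ(D⁻¹ B)`, then
`y = (|z|, 0)` satisfies `|μ| y ≤ M y`. Some power `P = (1 + M)^K` is entrywise positive, so
`w = P y` is positive and `M w - |μ| w = P (M y - |μ| y)` is positive too (`M y = |μ| y` is
impossible because `y` has a zero entry). Hence `c w ≤ M w` for some `c > |μ|`, and Gelfand's
formula for the row-sum norm, evaluated at a maximal entry of `w`, gives `ρ(M) ≥ c`.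
-/

open Filter Topology
open scoped NNReal ENNReal

attribute [local instance] Matrix.linftyOpNormedAddCommGroup Matrix.linftyOpNormedRing
  Matrix.linftyOpNormedAlgebra

theorem le_spectralRadius_of_pow_le_nnnorm_pow {A : Type*} [NormedRing A] [NormedAlgebra ℂ A]
    [CompleteSpace A] {a : A} {C : ℝ≥0} (h : ∀ k : ℕ, C ^ k ≤ ‖a ^ k‖₊) :
    (C : ℝ≥0∞) ≤ spectralRadius ℂ a := by
  refine ge_of_tendsto (spectrum.pow_nnnorm_pow_one_div_tendsto_nhds_spectralRadius a) ?_
  filter_upwards [eventually_ne_atTop 0] with k hk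
  calc (C : ℝ≥0∞) = ((C : ℝ≥0∞) ^ k) ^ (1 / k : ℝ) := by
        rw [← ENNReal.rpow_natCast, ← ENNReal.rpow_mul, mul_one_div_cancel (by exact_mod_cast hk),
          ENNReal.rpow_one]
    _ ≤ (‖a ^ k‖₊ : ℝ≥0∞) ^ (1 / k : ℝ) := by gcongr; exact_mod_cast h k

namespace Matrix

variable {I : Type*} [Fintype I] {M : Matrix I I ℝ}

lemma inv_diagonal_of_ne_zero [DecidableEq I] {K : Type*} [Field K] {v : I → K}
    (hv : ∀ i, v i ≠ 0) : (diagonal v)⁻¹ = diagonal v⁻¹ := by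
  refine inv_eq_left_inv ?_
  rw [diagonal_mul_diagonal, ← diagonal_one]
  exact congrArg diagonal (funext fun i => inv_mul_cancel₀ (hv i))

lemma pow_mulVec_of_mulVec_eq_smul [DecidableEq I] {R : Type*} [CommSemiring R]
    {A : Matrix I I R} {μ : R} {v : I → R} (h : A *ᵥ v = μ • v) (k : ℕ) :
    A ^ k *ᵥ v = μ ^ k • v := by
  induction k with
  | zero => simp
  | succ k ih => rw [pow_succ, ← mulVec_mulVec, h, mulVec_smul, ih, smul_smul, pow_succ']

lemma mulVec_mono (hM : ∀ i j, 0 ≤ M i j) {v w : I → ℝ} (h : v ≤ w) : M *ᵥ v ≤ M *ᵥ w :=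
  fun i => Finset.sum_le_sum fun j _ => mul_le_mul_of_nonneg_left (h j) (hM i j)

lemma mulVec_nonneg (hM : ∀ i j, 0 ≤ M i j) {v : I → ℝ} (hv : 0 ≤ v) : 0 ≤ M *ᵥ v := by
  simpa using mulVec_mono hM hv

lemma mulVec_pos (hM : ∀ i j, 0 < M i j) {v : I → ℝ} (hv : 0 ≤ v) (hv0 : v ≠ 0) (i : I) :
    0 < (M *ᵥ v) i := by
  obtain ⟨j, hj⟩ := Function.ne_iff.mp hv0
  exact Finset.sum_pos' (fun l _ => mul_nonneg (hM i l).le (hv l))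
    ⟨j, Finset.mem_univ j, mul_pos (hM i j) (lt_of_le_of_ne (hv j) (Ne.symm hj))⟩

lemma isIrreducible_iff_matIrred [DecidableEq I] (hM : ∀ i j, 0 ≤ M i j) :
    M.IsIrreducible ↔ MatIrred M :=
  isIrreducible_iff_exists_pow_pos hM

lemma IsIrreducible.diagonal_mul [DecidableEq I] (hM : M.IsIrreducible) {d : I → ℝ}
    (hd : ∀ i, 0 < d i) : (diagonal d * M).IsIrreducible := by
  have hpos (i j : I) : 0 < (diagonal d * M) i j ↔ 0 < M i j := by
    rw [Matrix.diagonal_mul, mul_pos_iff_of_pos_left (hd i)]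
  have hquiver : toQuiver (diagonal d * M) = toQuiver M := by
    unfold toQuiver
    simp_rw [hpos]
  refine ⟨fun i j => ?_, hquiver ▸ hM.connected⟩
  rw [Matrix.diagonal_mul]
  exact mul_nonneg (hd i).le (hM.nonneg i j)

lemma pow_apply_le_one_add_pow_apply [DecidableEq I] (hM : ∀ i j, 0 ≤ M i j) {k t : ℕ}
    (hkt : k ≤ t) (i j : I) : (M ^ k) i j ≤ ((1 + M) ^ t) i j := by
  rw [add_comm, (Commute.one_right M).add_pow, sum_apply]
  have hterm : ∀ l ∈ Finset.range (t + 1),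
      (M ^ l * 1 ^ (t - l) * (t.choose l : Matrix I I ℝ)) i j = t.choose l * (M ^ l) i j := by
    intro l _
    rw [one_pow, mul_one, ← diagonal_natCast', mul_diagonal, mul_comm, Pi.natCast_apply]
  rw [Finset.sum_congr rfl hterm]
  calc (M ^ k) i j ≤ t.choose k * (M ^ k) i j :=
        le_mul_of_one_le_left (pow_apply_nonneg hM k i j) (by exact_mod_cast Nat.choose_pos hkt)
    _ ≤ _ := Finset.single_le_sum (f := fun l => t.choose l * (M ^ l) i j)
          (fun l _ => mul_nonneg (Nat.cast_nonneg _) (pow_apply_nonneg hM l i j))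
          (Finset.mem_range_succ_iff.mpr hkt)

lemma IsIrreducible.exists_one_add_pow_pos [DecidableEq I] (hM : M.IsIrreducible) :
    ∃ K : ℕ, ∀ i j, 0 < ((1 + M) ^ K : Matrix I I ℝ) i j := by
  choose k _ hk using (isIrreducible_iff_exists_pow_pos hM.nonneg).mp hM
  refine ⟨Finset.univ.sup fun p : I × I => k p.1 p.2, fun i j => ?_⟩
  exact (hk i j).trans_le <| pow_apply_le_one_add_pow_apply hM.nonneg
    (Finset.le_sup (f := fun p : I × I => k p.1 p.2) (Finset.mem_univ (i, j))) i j

lemma sum_apply_le_norm_map_ofReal (hM : ∀ i j, 0 ≤ M i j) (i : I) :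
    ∑ j, M i j ≤ ‖M.map (algebraMap ℝ ℂ)‖ := by
  rw [linfty_opNorm_def]
  calc ∑ j, M i j = ((∑ j, ‖M.map (algebraMap ℝ ℂ) i j‖₊ : ℝ≥0) : ℝ) := by
        push_cast
        refine Finset.sum_congr rfl fun j _ => ?_
        simp [abs_of_nonneg (hM i j)]
    _ ≤ _ := NNReal.coe_le_coe.mpr
        (Finset.le_sup (f := fun i => ∑ j, ‖M.map (algebraMap ℝ ℂ) i j‖₊) (Finset.mem_univ i))

lemma ofReal_le_specRad_of_smul_le_mulVec [DecidableEq I] (hM : ∀ i j, 0 ≤ M i j) {c : ℝ}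
    (hc : 0 ≤ c) {w : I → ℝ} (hw : 0 ≤ w) (hw0 : w ≠ 0) (h : c • w ≤ M *ᵥ w) :
    ENNReal.ofReal c ≤ specRad M := by
  have hpow (k : ℕ) : c ^ k • w ≤ M ^ k *ᵥ w := by
    induction k with
    | zero => simp
    | succ k ih =>
      calc c ^ (k + 1) • w = c ^ k • c • w := by rw [pow_succ, mul_smul]
        _ ≤ c ^ k • (M *ᵥ w) := smul_le_smul_of_nonneg_left h (pow_nonneg hc k)
        _ = M *ᵥ (c ^ k • w) := (mulVec_smul M _ w).symm
        _ ≤ M *ᵥ (M ^ k *ᵥ w) := mulVec_mono hM ih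
        _ = M ^ (k + 1) *ᵥ w := by rw [mulVec_mulVec, pow_succ']
  obtain ⟨j, hj⟩ := Function.ne_iff.mp hw0
  have : Nonempty I := ⟨j⟩
  obtain ⟨i, hi⟩ := Finite.exists_max w
  have hwi : 0 < w i := (lt_of_le_of_ne (hw j) (Ne.symm hj)).trans_le (hi j)
  have hrow (k : ℕ) : c ^ k ≤ ∑ j, (M ^ k) i j := by
    refine le_of_mul_le_mul_right ?_ hwi
    calc c ^ k * w i ≤ ∑ j, (M ^ k) i j * w j := hpow k i
      _ ≤ ∑ j, (M ^ k) i j * w i := Finset.sum_le_sum fun j _ =>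
          mul_le_mul_of_nonneg_left (hi j) (pow_apply_nonneg hM k i j)
      _ = (∑ j, (M ^ k) i j) * w i := (Finset.sum_mul ..).symm
  refine le_spectralRadius_of_pow_le_nnnorm_pow fun k => ?_
  rw [← NNReal.coe_le_coe, coe_nnnorm, NNReal.coe_pow, Real.coe_toNNReal c hc,
    ← RingHom.mapMatrix_apply, ← map_pow, RingHom.mapMatrix_apply]
  exact (hrow k).trans (sum_apply_le_norm_map_ofReal (pow_apply_nonneg hM k) i)

lemma IsIrreducible.ofReal_lt_specRad [DecidableEq I] (hM : M.IsIrreducible) {r : ℝ} (hr : 0 ≤ r)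
    {y : I → ℝ} (hy : 0 ≤ y) (hy0 : y ≠ 0) {i₀ : I} (hyi₀ : y i₀ = 0) (h : r • y ≤ M *ᵥ y) :
    ENNReal.ofReal r < specRad M := by
  obtain ⟨K, hK⟩ := hM.exists_one_add_pow_pos
  set P : Matrix I I ℝ := (1 + M) ^ K
  set u := M *ᵥ y - r • y
  have hu : 0 ≤ u := sub_nonneg.mpr h
  have hu0 : u ≠ 0 := by
    intro hu0
    have hPy : P *ᵥ y = (1 + r) ^ K • y := by
      refine pow_mulVec_of_mulVec_eq_smul ?_ K
      rw [add_mulVec, one_mulVec, sub_eq_zero.mp hu0, add_smul, one_smul]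
    have := mulVec_pos hK hy hy0 i₀
    rw [hPy] at this
    simp [hyi₀] at this
  set w := P *ᵥ y
  have hw : ∀ i, 0 < w i := mulVec_pos hK hy hy0
  have hPu : P *ᵥ u = M *ᵥ w - r • w := by
    have hcomm : Commute M P := ((Commute.one_right M).add_right (Commute.refl M)).pow_right K
    rw [mulVec_sub, mulVec_smul, mulVec_mulVec, ← hcomm.eq, ← mulVec_mulVec]
  have hlt (i : I) : r * w i < (M *ᵥ w) i := by
    have := mulVec_pos hK hu hu0 i
    rw [hPu] at this
    simpa using this
  have hnear : ∀ᶠ c in 𝓝 r, ∀ i, c * w i < (M *ᵥ w) i :=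
    eventually_all.mpr fun i =>
      (continuous_id.mul continuous_const).continuousAt.eventually_lt continuousAt_const (hlt i)
  obtain ⟨c, hc, hrc⟩ :=
    ((hnear.filter_mono nhdsWithin_le_nhds).and (self_mem_nhdsWithin (s := Set.Ioi r))).exists
  calc ENNReal.ofReal r < ENNReal.ofReal c :=
        (ENNReal.ofReal_lt_ofReal_iff (hr.trans_lt hrc)).mpr hrc
    _ ≤ specRad M := ofReal_le_specRad_of_smul_le_mulVec hM.nonneg (hr.trans hrc.le)
        (fun i => (hw i).le) (fun h0 => (hw i₀).ne' (congrFun h0 i₀)) fun i => (hc i).le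

lemma exists_mulVec_eq_smul_ofReal_norm_eq_specRad [DecidableEq I] [Nonempty I]
    (A : Matrix I I ℝ) :
    ∃ (μ : ℂ) (z : I → ℂ), z ≠ 0 ∧ A.map (algebraMap ℝ ℂ) *ᵥ z = μ • z ∧
      ENNReal.ofReal ‖μ‖ = specRad A := by
  obtain ⟨μ, hμ, hμA⟩ := spectrum.exists_nnnorm_eq_spectralRadius_of_nonempty (𝕜 := ℂ)
    (spectrum.nonempty (A.map (algebraMap ℝ ℂ)))
  rw [← spectrum_toLin', ← Module.End.hasEigenvalue_iff_mem_spectrum] at hμ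
  obtain ⟨z, hz⟩ := hμ.exists_hasEigenvector
  exact ⟨μ, z, hz.2, by simpa using hz.apply_eq_smul, by
    rw [specRad, ← hμA, ENNReal.ofReal_eq_coe_nnreal (norm_nonneg μ)]; rfl⟩

lemma norm_smul_le_mulVec_norm {A : Matrix I I ℝ} (hA : ∀ i j, 0 ≤ A i j) {μ : ℂ} {z : I → ℂ}
    (hz : A.map (algebraMap ℝ ℂ) *ᵥ z = μ • z) :
    ‖μ‖ • (fun i => ‖z i‖) ≤ A *ᵥ fun i => ‖z i‖ := fun i =>
  calc ‖μ‖ * ‖z i‖ = ‖∑ j, (A i j : ℂ) * z j‖ := by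
        rw [← norm_mul, ← smul_eq_mul, ← Pi.smul_apply, ← hz]; rfl
    _ ≤ ∑ j, A i j * ‖z j‖ := (norm_sum_le _ _).trans_eq <| Finset.sum_congr rfl fun j _ => by
        rw [norm_mul, Complex.norm_real, Real.norm_of_nonneg (hA i j)]

theorem IsIrreducible.specRad_toBlocks₁₁_lt {J : Type*} [Fintype J] [DecidableEq I] [DecidableEq J]
    [Nonempty I] [Nonempty J] {M : Matrix (I ⊕ J) (I ⊕ J) ℝ} (hM : M.IsIrreducible) :
    specRad M.toBlocks₁₁ < specRad M := by
  have hA : ∀ i j, 0 ≤ M.toBlocks₁₁ i j := fun i j => hM.nonneg _ _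
  obtain ⟨μ, z, hz0, hz, hμ⟩ := exists_mulVec_eq_smul_ofReal_norm_eq_specRad M.toBlocks₁₁
  let y : I ⊕ J → ℝ := Sum.elim (fun i => ‖z i‖) 0
  obtain ⟨i, hi⟩ := Function.ne_iff.mp hz0
  obtain ⟨j⟩ := ‹Nonempty J›
  rw [← hμ]
  have hy : 0 ≤ y := by rintro (i | j) <;> simp [y]
  refine hM.ofReal_lt_specRad (norm_nonneg μ) hy ?_ (i₀ := .inr j) rfl ?_
  · exact Function.ne_iff.mpr ⟨.inl i, by simpa [y] using hi⟩
  rintro (i | j)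
  · rw [← fromBlocks_toBlocks M, fromBlocks_mulVec]
    simpa [y] using norm_smul_le_mulVec_norm hA hz i
  · simpa [y] using mulVec_nonneg hM.nonneg hy (.inr j)

end Matrix

/-- the basic reproduction number of the layered networked SIWS model
strictly exceeds that of the networked SIS model (Proposition 3). -/
theorem siws_reproduction_number_larger {n m : ℕ} (hn : 0 < n) (hm : 0 < m)
    (δ : Fin n → ℝ) (δw : Fin m → ℝ)
    (B : Matrix (Fin n) (Fin n) ℝ) (Bw : Matrix (Fin n) (Fin m) ℝ)
    (Cw : Matrix (Fin m) (Fin n) ℝ) (Aw : Matrix (Fin m) (Fin m) ℝ)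
    (hBf : ∀ i j, 0 ≤ BfM B Bw Cw Aw i j)
    (hDf : ∀ i, 0 < DfM δ δw Aw i i)
    (hirr : MatIrred (BfM B Bw Cw Aw)) :
    specRad ((Matrix.diagonal δ)⁻¹ * B) < specRad ((DfM δ δw Aw)⁻¹ * BfM B Bw Cw Aw) := by
  have : Nonempty (Fin n) := Fin.pos_iff_nonempty.mp hn
  have : Nonempty (Fin m) := Fin.pos_iff_nonempty.mp hm
  set d := Sum.elim δ fun j => δw j - Aw j j
  have hDf_eq : DfM δ δw Aw = diagonal d := fromBlocks_diagonal _ _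
  have hd (i : Fin n ⊕ Fin m) : 0 < d i := by simpa [hDf_eq] using hDf i
  rw [hDf_eq, inv_diagonal_of_ne_zero fun i => (hd i).ne',
    inv_diagonal_of_ne_zero (v := δ) fun i => (hd (.inl i)).ne']
  have hM : (diagonal d⁻¹ * BfM B Bw Cw Aw).IsIrreducible :=
    ((isIrreducible_iff_matIrred hBf).mpr hirr).diagonal_mul fun i => inv_pos.mpr (hd i)
  have hblock : (diagonal d⁻¹ * BfM B Bw Cw Aw).toBlocks₁₁ = diagonal δ⁻¹ * B := by
    ext a b
    simp [toBlocks₁₁, BfM, d, diagonal_mul]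
  exact hblock ▸ hM.specRad_toBlocks₁₁_lt
end

section
/- Suppose Assumption 2 holds, B_f is irreducible, and ρ(D_f^{-1}B_f) > 1. If z and z' are both strictly positive equilibria of the layered networked SIWS model, i.e., z ≫ 0, z' ≫ 0, (−D_f + (I − X(z)) B_f) z = 0 and (−D_f + (I − X(z')) B_f) z' = 0, then z = z'. -/
open Matrix

variable {n m : ℕ}

-- pow nonneg
lemma siws_pow_nonneg {N : Type*} [Fintype N] [DecidableEq N] (A : Matrix N N ℝ)
    (hA : ∀ i j, 0 ≤ A i j) : ∀ k i j, 0 ≤ (A ^ k) i j := by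
  intro k
  induction k with
  | zero => intro i j; rw [pow_zero, Matrix.one_apply]; split <;> norm_num
  | succ k ih =>
    intro i j
    rw [pow_succ, Matrix.mul_apply]
    exact Finset.sum_nonneg fun l _ => mul_nonneg (ih i l) (hA l j)

-- propagation along powers
lemma siws_reach {N : Type*} [Fintype N] [DecidableEq N] (A : Matrix N N ℝ)
    (hA : ∀ i j, 0 ≤ A i j) (P : N → Prop)
    (hstep : ∀ i j, P i → 0 < A i j → P j) :
    ∀ k i j, P i → 0 < (A ^ k) i j → P j := by
  intro k
  induction k with
  | zero =>
    intro i j hPi hpos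
    rw [pow_zero, Matrix.one_apply] at hpos
    split at hpos
    · subst ‹i = j›; exact hPi
    · exact absurd hpos (lt_irrefl 0)
  | succ k ih =>
    intro i j hPi hpos
    rw [pow_succ, Matrix.mul_apply] at hpos
    have hex : ∃ l, 0 < (A ^ k) i l * A l j := by
      by_contra h
      push_neg at h
      have : ∑ l, (A ^ k) i l * A l j ≤ 0 := Finset.sum_nonpos fun l _ => h l
      linarith
    obtain ⟨l, hl⟩ := hex
    rcases mul_pos_iff.mp hl with ⟨h1, h2⟩ | ⟨h1, _⟩
    · exact hstep l j (ih i l hPi h1) h2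
    · exact absurd (siws_pow_nonneg A hA k i l) (not_le.mpr h1)


lemma siws_le {n m : ℕ} (hn : 0 < n)
    (δ : Fin n → ℝ) (δw : Fin m → ℝ)
    (B : Matrix (Fin n) (Fin n) ℝ) (Bw : Matrix (Fin n) (Fin m) ℝ)
    (Cw : Matrix (Fin m) (Fin n) ℝ) (Aw : Matrix (Fin m) (Fin m) ℝ)
    (hδ : ∀ i, 0 < δ i) (hδw : ∀ j, 0 < δw j)
    (hB : ∀ i j, 0 ≤ B i j) (hBw : ∀ i j, 0 ≤ Bw i j) (hCw : ∀ i j, 0 ≤ Cw i j)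
    (hAw : ∀ i j, i ≠ j → 0 ≤ Aw i j)
    (hAwcol : ∀ j, ∑ i, Aw i j = 0)
    (hirr : MatIrred (BfM B Bw Cw Aw))
    (z z' : Fin n ⊕ Fin m → ℝ)
    (hz : ∀ i, 0 < z i) (hz' : ∀ i, 0 < z' i)
    (heq : (-(DfM δ δw Aw) +
      ((1 : Matrix (Fin n ⊕ Fin m) (Fin n ⊕ Fin m) ℝ) - XzM z) * BfM B Bw Cw Aw) *ᵥ z = 0)
    (heq' : (-(DfM δ δw Aw) +
      ((1 : Matrix (Fin n ⊕ Fin m) (Fin n ⊕ Fin m) ℝ) - XzM z') * BfM B Bw Cw Aw) *ᵥ z' = 0) :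
    ∀ i, z i ≤ z' i := by
  haveI : Nonempty (Fin n) := ⟨⟨0, hn⟩⟩
  set A := BfM B Bw Cw Aw with hAdef
  set d : Fin n ⊕ Fin m → ℝ := Sum.elim δ (fun j => δw j - Aw j j) with hddef
  -- nonnegativity of A
  have hAnn : ∀ i j, 0 ≤ A i j := by
    rintro (i | i) (j | j)
    · exact hB i j
    · exact hBw i j
    · exact hCw i j
    · show 0 ≤ (Aw - Matrix.diagonal fun j => Aw j j) i j
      rw [Matrix.sub_apply, Matrix.diagonal_apply]
      by_cases h : i = j
      · subst h; simp
      · simp only [if_neg h, sub_zero]; exact hAw i j h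
  -- positivity of d
  have hd : ∀ i, 0 < d i := by
    rintro (i | j)
    · exact hδ i
    · have hAwjj : Aw j j ≤ 0 := by
        have h1 := hAwcol j
        have h2 : ∑ i ∈ Finset.univ.erase j, Aw i j ≥ 0 :=
          Finset.sum_nonneg fun i hi => hAw i j (Finset.ne_of_mem_erase hi)
        have h3 : Aw j j + ∑ i ∈ Finset.univ.erase j, Aw i j = 0 := by
          rw [Finset.add_sum_erase _ (fun i => Aw i j) (Finset.mem_univ j)]
          exact h1
        linarith
      show 0 < δw j - Aw j j
      linarith [hδw j]
  -- coordinate equations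
  have hDf : DfM δ δw Aw = Matrix.diagonal d := by
    rw [DfM, Matrix.fromBlocks_diagonal]
  have hXz : ∀ (w : Fin n ⊕ Fin m → ℝ),
      (1 : Matrix (Fin n ⊕ Fin m) (Fin n ⊕ Fin m) ℝ) - XzM w =
      Matrix.diagonal (fun i => 1 - Sum.elim (fun a => w (Sum.inl a)) (fun _ => (0:ℝ)) i) := by
    intro w
    rw [XzM, ← Matrix.diagonal_one, Matrix.diagonal_sub]
  have hcoord : ∀ (w : Fin n ⊕ Fin m → ℝ),
      ((-(DfM δ δw Aw) +
        ((1 : Matrix (Fin n ⊕ Fin m) (Fin n ⊕ Fin m) ℝ) - XzM w) * A) *ᵥ w = 0) →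
      ∀ i, d i * w i =
        (1 - Sum.elim (fun a => w (Sum.inl a)) (fun _ => (0:ℝ)) i) * (A *ᵥ w) i := by
    intro w hw i
    have h := congrFun hw i
    rw [Matrix.add_mulVec, Matrix.neg_mulVec, ← Matrix.mulVec_mulVec, hDf, hXz] at h
    simp only [Pi.add_apply, Pi.neg_apply, Matrix.mulVec_diagonal, Pi.zero_apply] at h
    linarith
  have hc := hcoord z heq
  have hc' := hcoord z' heq'
  clear heq heq' hcoord
  set s : Fin n ⊕ Fin m → ℝ := A *ᵥ z with hsdef
  set s' : Fin n ⊕ Fin m → ℝ := A *ᵥ z' with hs'def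
  -- s nonneg and positive
  have hsnn : ∀ (w : Fin n ⊕ Fin m → ℝ), (∀ i, 0 < w i) → ∀ i, 0 ≤ (A *ᵥ w) i := by
    intro w hw i
    simp only [Matrix.mulVec, dotProduct]
    exact Finset.sum_nonneg fun j _ => mul_nonneg (hAnn i j) (hw j).le
  -- rearranged equations per case
  have hcl : ∀ a : Fin n, z (Sum.inl a) * (d (Sum.inl a) + s (Sum.inl a)) = s (Sum.inl a) := by
    intro a; have := hc (Sum.inl a); simp only [Sum.elim_inl] at this; linear_combination this
  have hcl' : ∀ a : Fin n, z' (Sum.inl a) * (d (Sum.inl a) + s' (Sum.inl a)) = s' (Sum.inl a) := by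
    intro a; have := hc' (Sum.inl a); simp only [Sum.elim_inl] at this; linear_combination this
  have hcr : ∀ b : Fin m, d (Sum.inr b) * z (Sum.inr b) = s (Sum.inr b) := by
    intro b; have := hc (Sum.inr b); simpa using this
  have hcr' : ∀ b : Fin m, d (Sum.inr b) * z' (Sum.inr b) = s' (Sum.inr b) := by
    intro b; have := hc' (Sum.inr b); simpa using this
  have hspos : ∀ a : Fin n, 0 < s (Sum.inl a) := by
    intro a
    have h0 := hsnn z hz (Sum.inl a)
    have h1 := hcl a
    nlinarith [hz (Sum.inl a), hd (Sum.inl a), mul_pos (hz (Sum.inl a)) (hd (Sum.inl a)),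
      mul_nonneg (hz (Sum.inl a)).le h0]
  have hs'pos : ∀ a : Fin n, 0 < s' (Sum.inl a) := by
    intro a
    have h0 := hsnn z' hz' (Sum.inl a)
    have h1 := hcl' a
    nlinarith [hz' (Sum.inl a), hd (Sum.inl a), mul_pos (hz' (Sum.inl a)) (hd (Sum.inl a)),
      mul_nonneg (hz' (Sum.inl a)).le h0]
  -- define kappa
  have hne : (Finset.univ : Finset (Fin n ⊕ Fin m)).Nonempty := Finset.univ_nonempty
  set κ : ℝ := Finset.univ.sup' hne (fun i => z i / z' i) with hκdef
  have hκle : ∀ i, z i ≤ κ * z' i := by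
    intro i
    have h1 : z i / z' i ≤ κ := by
      rw [hκdef]; exact Finset.le_sup' (fun i => z i / z' i) (Finset.mem_univ i)
    rw [div_le_iff₀ (hz' i)] at h1
    linarith [h1]
  obtain ⟨i₀, -, hi₀⟩ := Finset.exists_mem_eq_sup' hne (fun i => z i / z' i)
  rw [← hκdef] at hi₀
  rw [eq_div_iff (ne_of_gt (hz' i₀))] at hi₀
  have hi₀eq : z i₀ = κ * z' i₀ := hi₀.symm
  -- suppose κ > 1, derive contradiction
  have hκ1 : κ ≤ 1 := by
    by_contra hκ
    push_neg at hκ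
    -- s i ≤ κ * s' i
    have hsκ : ∀ i, s i ≤ κ * s' i := by
      intro i
      rw [hsdef, hs'def]
      simp only [Matrix.mulVec, dotProduct]
      rw [Finset.mul_sum]
      refine Finset.sum_le_sum fun j _ => ?_
      have := hκle j
      have hAij := hAnn i j
      nlinarith
    -- P is the equality set
    set P : Fin n ⊕ Fin m → Prop := fun i => z i = κ * z' i with hPdef
    -- no inl index can be in P
    have hPinl : ∀ a : Fin n, ¬ P (Sum.inl a) := by
      intro a hPa
      have h1 := hcl a
      have h2 := hcl' a
      have h3 := hsκ (Sum.inl a)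
      have h4 := hspos a
      have h5 := hs'pos a
      have h6 := hd (Sum.inl a)
      have hden  : 0 < d (Sum.inl a) + s (Sum.inl a) := by linarith
      have hden' : 0 < d (Sum.inl a) + s' (Sum.inl a) := by linarith
      have hzeq : z (Sum.inl a) = s (Sum.inl a) / (d (Sum.inl a) + s (Sum.inl a)) := by
        rw [eq_div_iff (ne_of_gt hden)]; exact h1
      have hz'eq : z' (Sum.inl a) = s' (Sum.inl a) / (d (Sum.inl a) + s' (Sum.inl a)) := by
        rw [eq_div_iff (ne_of_gt hden')]; exact h2
      have h7 : s (Sum.inl a) / (d (Sum.inl a) + s (Sum.inl a)) <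
          (κ * s' (Sum.inl a)) / (d (Sum.inl a) + s' (Sum.inl a)) := by
        rw [div_lt_div_iff₀ hden hden']
        nlinarith [mul_le_mul_of_nonneg_right h3 h6.le, mul_pos h4 h5]
      have hzlt : z (Sum.inl a) < κ * z' (Sum.inl a) := by
        rw [hzeq, hz'eq, ← mul_div_assoc]; exact h7
      rw [hPa] at hzlt
      exact absurd hzlt (lt_irrefl _)
    -- propagation step
    have hstep : ∀ i j, P i → 0 < A i j → P j := by
      rintro (a | b) j hPi hApos
      · exact absurd hPi (hPinl a)
      · -- inr case: d * z = s, equality of sums forces termwise equality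
        have h1 := hcr b
        have h2 := hcr' b
        have hsb : s (Sum.inr b) = κ * s' (Sum.inr b) := by
          have hp : z (Sum.inr b) = κ * z' (Sum.inr b) := hPi
          linear_combination (-1 : ℝ) * h1 + κ * h2 + d (Sum.inr b) * hp
        have hsum : ∑ k, A (Sum.inr b) k * z k = ∑ k, A (Sum.inr b) k * (κ * z' k) := by
          have e1 : s (Sum.inr b) = ∑ k, A (Sum.inr b) k * z k := by
            rw [hsdef]; simp [Matrix.mulVec, dotProduct]
          have e2 : s' (Sum.inr b) = ∑ k, A (Sum.inr b) k * z' k := by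
            rw [hs'def]; simp [Matrix.mulVec, dotProduct]
          rw [e1] at hsb
          rw [hsb, e2, Finset.mul_sum]
          congr 1; ext k; ring
        have hterm : ∀ k ∈ Finset.univ, A (Sum.inr b) k * z k = A (Sum.inr b) k * (κ * z' k) := by
          refine (Finset.sum_eq_sum_iff_of_le fun k _ => ?_).mp hsum
          have := hκle k
          have hAk := hAnn (Sum.inr b) k
          nlinarith
        have := hterm j (Finset.mem_univ j)
        rw [hPdef]
        exact mul_left_cancel₀ (ne_of_gt hApos) this
    -- irreducibility: from i₀ reach an inl index
    obtain ⟨k, -, hk⟩ := hirr i₀ (Sum.inl ⟨0, hn⟩)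
    exact hPinl ⟨0, hn⟩ (siws_reach A hAnn P hstep k i₀ (Sum.inl ⟨0, hn⟩) hi₀eq hk)
  intro i
  have := hκle i
  nlinarith [hz' i]


/-- uniqueness of the strictly positive (endemic) equilibrium
(part of Theorem 2). -/
theorem siws_endemic_unique {n m : ℕ} (hn : 0 < n) (hm : 0 < m)
    (δ : Fin n → ℝ) (δw : Fin m → ℝ)
    (B : Matrix (Fin n) (Fin n) ℝ) (Bw : Matrix (Fin n) (Fin m) ℝ)
    (Cw : Matrix (Fin m) (Fin n) ℝ) (Aw : Matrix (Fin m) (Fin m) ℝ)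
    (hδ : ∀ i, 0 < δ i) (hδw : ∀ j, 0 < δw j)
    (hB : ∀ i j, 0 ≤ B i j) (hBw : ∀ i j, 0 ≤ Bw i j) (hCw : ∀ i j, 0 ≤ Cw i j)
    (hAw : ∀ i j, i ≠ j → 0 ≤ Aw i j)
    (hAwcol : ∀ j, ∑ i, Aw i j = 0)
    (hirr : MatIrred (BfM B Bw Cw Aw))
    (hρ : 1 < specRad ((DfM δ δw Aw)⁻¹ * BfM B Bw Cw Aw))
    (z z' : Fin n ⊕ Fin m → ℝ)
    (hz : ∀ i, 0 < z i) (hz' : ∀ i, 0 < z' i)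
    (heq : (-(DfM δ δw Aw) +
      ((1 : Matrix (Fin n ⊕ Fin m) (Fin n ⊕ Fin m) ℝ) - XzM z) * BfM B Bw Cw Aw) *ᵥ z = 0)
    (heq' : (-(DfM δ δw Aw) +
      ((1 : Matrix (Fin n ⊕ Fin m) (Fin n ⊕ Fin m) ℝ) - XzM z') * BfM B Bw Cw Aw) *ᵥ z' = 0) :
    z = z' := by
  funext i
  exact le_antisymm
    (siws_le hn δ δw B Bw Cw Aw hδ hδw hB hBw hCw hAw hAwcol hirr z z' hz hz' heq heq' i)
    (siws_le hn δ δw B Bw Cw Aw hδ hδw hB hBw hCw hAw hAwcol hirr z' z hz' hz heq' heq i)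
end

section
/- Suppose Assumption 2 holds and B_f is irreducible. Then the healthy state 0 is the unique point z ∈ 𝒟 satisfying (−D_f + (I − X(z)) B_f) z = 0 if and only if ρ(D_f^{-1}B_f) ≤ 1. -/
open Matrix

variable {n m : ℕ}

namespace SIWS
open Filter Topology
set_option linter.unusedSectionVars false
variable {N : Type*} [Fintype N] [DecidableEq N]

lemma mulVec_nonneg {M : Matrix N N ℝ} (hM : ∀ i j, 0 ≤ M i j) {v : N → ℝ}
    (hv : ∀ i, 0 ≤ v i) : ∀ i, 0 ≤ (M *ᵥ v) i := fun i =>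
  Finset.sum_nonneg fun j _ => mul_nonneg (hM i j) (hv j)

lemma mulVec_mono {M : Matrix N N ℝ} (hM : ∀ i j, 0 ≤ M i j) {u v : N → ℝ}
    (huv : ∀ i, u i ≤ v i) : ∀ i, (M *ᵥ u) i ≤ (M *ᵥ v) i := fun i =>
  Finset.sum_le_sum fun j _ => mul_le_mul_of_nonneg_left (huv j) (hM i j)

lemma pow_nonneg'' {M : Matrix N N ℝ} (hM : ∀ i j, 0 ≤ M i j) (k : ℕ) :
    ∀ i j, 0 ≤ (M ^ k) i j := by
  induction k with
  | zero => intro i j; by_cases h : i = j <;> simp [pow_zero, Matrix.one_apply, h]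
  | succ k ih =>
    intro i j
    rw [pow_succ, Matrix.mul_apply]
    exact Finset.sum_nonneg fun l _ => mul_nonneg (ih i l) (hM l j)

lemma pow_le_pow_entrywise {A B : Matrix N N ℝ} (hA : ∀ i j, 0 ≤ A i j)
    (hAB : ∀ i j, A i j ≤ B i j) (k : ℕ) : ∀ i j, (A ^ k) i j ≤ (B ^ k) i j := by
  induction k with
  | zero => intro i j; simp [pow_zero]
  | succ k ih =>
    intro i j
    rw [pow_succ, pow_succ, Matrix.mul_apply, Matrix.mul_apply]
    refine Finset.sum_le_sum fun l _ => mul_le_mul (ih i l) (hAB l j) (hA l j) ?_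
    exact le_trans (pow_nonneg'' hA k i l) (ih i l)

lemma sum_mulVec' {β : Type*} (s : Finset β) (A : β → Matrix N N ℝ) (p : N → ℝ) (i : N) :
    ((∑ l ∈ s, A l) *ᵥ p) i = ∑ l ∈ s, ((A l) *ᵥ p) i := by
  simp only [Matrix.mulVec, dotProduct, Matrix.sum_apply, Finset.sum_mul]
  exact Finset.sum_comm

section Spectral
attribute [local instance] Matrix.linftyOpSeminormedAddCommGroup Matrix.linftyOpNormedAddCommGroup
  Matrix.linftyOpNormedSpace Matrix.linftyOpNonUnitalSemiNormedRing Matrix.linftyOpSemiNormedRing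
  Matrix.linftyOpNonUnitalNormedRing Matrix.linftyOpNormedRing Matrix.linftyOpNormedAlgebra

noncomputable local instance : CompleteSpace (Matrix N N ℂ) := FiniteDimensional.complete ℂ _

lemma map_pow_complex (M : Matrix N N ℝ) (k : ℕ) :
    (M.map (algebraMap ℝ ℂ)) ^ k = (M ^ k).map (algebraMap ℝ ℂ) := by
  simpa [RingHom.mapMatrix_apply] using (map_pow ((algebraMap ℝ ℂ).mapMatrix) M k).symm

lemma mulVec_complex (M : Matrix N N ℝ) (v : N → ℝ) (i : N) :
    ((M.map (algebraMap ℝ ℂ)) *ᵥ (fun j => (v j : ℂ))) i = ((M *ᵥ v) i : ℂ) := by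
  simp [Matrix.mulVec, dotProduct, Matrix.map_apply]

lemma one_lt_specRad_of_pow {M : Matrix N N ℝ} (hM : ∀ i j, 0 ≤ M i j) {v : N → ℝ}
    (hv : ∀ i, 0 ≤ v i) (hv0 : v ≠ 0) {K : ℕ} (hK : 0 < K) {r : ℝ} (hr : 1 < r)
    (h : ∀ i, r * v i ≤ ((M ^ K) *ᵥ v) i) : 1 < specRad M := by
  by_contra hle
  push_neg at hle
  set a := M.map (algebraMap ℝ ℂ) with ha
  obtain ⟨i₀, hi₀⟩ : ∃ i, 0 < v i := by
    by_contra hc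
    push_neg at hc
    exact hv0 (funext fun i => le_antisymm (hc i) (hv i))
  set vc : N → ℂ := fun j => (v j : ℂ) with hvc
  have hvc0 : vc ≠ 0 := by
    intro hcontra
    apply hv0
    funext i
    have := congrFun hcontra i
    simpa [hvc] using this
  have hvcpos : 0 < ‖vc‖ := norm_pos_iff.mpr hvc0
  have key : ∀ j : ℕ, ∀ i, r ^ j * v i ≤ ((M ^ (j * K)) *ᵥ v) i := by
    intro j
    induction j with
    | zero => intro i; simpa using hv i
    | succ j ih =>
      intro i
      have h1 : (M ^ ((j+1) * K)) *ᵥ v = (M ^ K) *ᵥ ((M ^ (j * K)) *ᵥ v) := by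
        rw [Matrix.mulVec_mulVec, ← pow_add]
        ring_nf
      have h2 : ∀ i, (r ^ j) * v i ≤ ((M ^ (j*K)) *ᵥ v) i := ih
      have h3 : ((M ^ K) *ᵥ (fun i => r ^ j * v i)) i ≤ ((M ^ K) *ᵥ ((M ^ (j*K)) *ᵥ v)) i :=
        mulVec_mono (pow_nonneg'' hM K) h2 i
      have h4 : ((M ^ K) *ᵥ (fun i => r ^ j * v i)) i = r ^ j * ((M ^ K) *ᵥ v) i := by
        simp [Matrix.mulVec, dotProduct, Finset.mul_sum]
        exact Finset.sum_congr rfl fun j _ => by ring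
      have h5 : r ^ (j+1) * v i ≤ r ^ j * ((M ^ K) *ᵥ v) i := by
        have := h i
        have hrj : (0:ℝ) ≤ r ^ j := pow_nonneg (by linarith) j
        calc r ^ (j+1) * v i = r ^ j * (r * v i) := by ring
        _ ≤ r ^ j * ((M ^ K) *ᵥ v) i := by nlinarith
      rw [h1]
      calc r ^ (j+1) * v i ≤ r ^ j * ((M ^ K) *ᵥ v) i := h5
      _ = ((M ^ K) *ᵥ (fun i => r ^ j * v i)) i := h4.symm
      _ ≤ _ := h3
  have lower : ∀ j : ℕ, r ^ j * v i₀ ≤ ‖a ^ (j * K)‖ * ‖vc‖ := by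
    intro j
    have e1 : ((a ^ (j*K)) *ᵥ vc) i₀ = (((M ^ (j*K)) *ᵥ v) i₀ : ℂ) := by
      rw [ha, map_pow_complex]
      exact mulVec_complex _ _ _
    calc r ^ j * v i₀ ≤ ((M ^ (j*K)) *ᵥ v) i₀ := key j i₀
    _ ≤ ‖(((M ^ (j*K)) *ᵥ v) i₀ : ℂ)‖ := by
        rw [Complex.norm_real]; exact le_abs_self _
    _ = ‖((a ^ (j*K)) *ᵥ vc) i₀‖ := by rw [e1]
    _ ≤ ‖(a ^ (j*K)) *ᵥ vc‖ := norm_le_pi_norm _ i₀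
    _ ≤ ‖a ^ (j*K)‖ * ‖vc‖ := Matrix.linfty_opNorm_mulVec _ _
  have hev : ∀ᶠ t in 𝓝 (1:ℝ), t ^ K < r := by
    have := (continuous_pow K).tendsto (1:ℝ)
    simp only [one_pow] at this
    exact this.eventually_lt_const hr
  obtain ⟨r', hr'K, hr'1⟩ :=
    ((hev.filter_mono nhdsWithin_le_nhds).and
      (eventually_mem_nhdsWithin (s := Set.Ioi (1:ℝ)))).exists
  have hr'1 : 1 < r' := hr'1
  have gel := spectrum.pow_norm_pow_one_div_tendsto_nhds_spectralRadius a
  have hlt : spectralRadius ℂ a < ENNReal.ofReal r' := by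
    have heq : specRad M = spectralRadius ℂ a := rfl
    rw [heq] at hle
    exact lt_of_le_of_lt hle (ENNReal.one_lt_ofReal.mpr hr'1)
  have hev2 : ∀ᶠ k : ℕ in atTop, ENNReal.ofReal (‖a ^ k‖ ^ (1/(k:ℝ))) < ENNReal.ofReal r' :=
    gel.eventually_lt_const hlt
  obtain ⟨k₀, hk₀⟩ := eventually_atTop.mp hev2
  set θ : ℝ := r' ^ K / r with hθ
  have hθpos : 0 < θ := div_pos (pow_pos (by linarith) K) (by linarith)
  have hθlt : θ < 1 := (div_lt_one (by linarith)).mpr hr'K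
  have hgeo : Filter.Tendsto (fun j : ℕ => θ ^ j) atTop (𝓝 0) :=
    tendsto_pow_atTop_nhds_zero_of_lt_one (le_of_lt hθpos) hθlt
  set c : ℝ := v i₀ / ‖vc‖ with hc
  have hcpos : 0 < c := div_pos hi₀ hvcpos
  have hev3 : ∀ᶠ j : ℕ in atTop, θ ^ j < c := hgeo.eventually_lt_const hcpos
  have hev4 : ∀ᶠ j : ℕ in atTop, c ≤ θ ^ j := by
    filter_upwards [eventually_ge_atTop (max k₀ 1)] with j hj
    have hj1 : 1 ≤ j := le_trans (le_max_right _ _) hj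
    have hjk₀ : k₀ ≤ j * K := by
      calc k₀ ≤ j := le_trans (le_max_left _ _) hj
      _ ≤ j * K := Nat.le_mul_of_pos_right j hK
    have hup := hk₀ _ hjk₀
    have hnorm_nonneg : (0:ℝ) ≤ ‖a ^ (j*K)‖ := norm_nonneg _
    have h6 : ‖a ^ (j*K)‖ ^ (1/(j*K:ℕ):ℝ) < r' := by
      rw [ENNReal.ofReal_lt_ofReal_iff (by linarith)] at hup
      exact hup
    have h7 : ‖a ^ (j*K)‖ < r' ^ (j*K) := by
      have hne : (j*K : ℕ) ≠ 0 := Nat.mul_ne_zero (by omega) (by omega)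
      have := pow_lt_pow_left₀ h6 (Real.rpow_nonneg hnorm_nonneg _) hne
      rwa [one_div, Real.rpow_inv_natCast_pow hnorm_nonneg hne] at this
    have h8 : r ^ j * v i₀ < r' ^ (j*K) * ‖vc‖ := by
      calc r ^ j * v i₀ ≤ ‖a ^ (j*K)‖ * ‖vc‖ := lower j
      _ < r' ^ (j*K) * ‖vc‖ := mul_lt_mul_of_pos_right h7 hvcpos
    have h9 : r' ^ (j * K) = (r' ^ K) ^ j := by rw [← pow_mul, Nat.mul_comm]
    have hrpow : (0:ℝ) < r ^ j := pow_pos (by linarith) j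
    rw [hc, div_le_iff₀ hvcpos]
    rw [hθ, div_pow, div_mul_eq_mul_div, le_div_iff₀ hrpow]
    calc v i₀ * r ^ j = r ^ j * v i₀ := by ring
    _ ≤ r' ^ (j*K) * ‖vc‖ := le_of_lt h8
    _ = (r' ^ K) ^ j * ‖vc‖ := by rw [h9]
  obtain ⟨j, hj1, hj2⟩ := (hev3.and hev4).exists
  linarith

lemma exists_vec_of_one_lt_specRad [Nonempty N] {M : Matrix N N ℝ}
    (hM : ∀ i j, 0 ≤ M i j) (h : 1 < specRad M) :
    ∃ (r : ℝ) (v : N → ℝ), 1 < r ∧ (∀ i, 0 ≤ v i) ∧ v ≠ 0 ∧ ∀ i, r * v i ≤ (M *ᵥ v) i := by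
  set a := M.map (algebraMap ℝ ℂ) with ha
  obtain ⟨z, hz, hznorm⟩ := spectrum.exists_nnnorm_eq_spectralRadius a
  have hz1 : 1 < ‖z‖ := by
    have h1 : (1 : ENNReal) < (‖z‖₊ : ENNReal) := by
      rw [hznorm]; exact h
    exact_mod_cast h1
  have hdet : (algebraMap ℂ (Matrix N N ℂ) z - a).det = 0 := by
    have hmem := spectrum.mem_iff.mp hz
    by_contra hne
    exact hmem ((Matrix.isUnit_iff_isUnit_det _).mpr (isUnit_iff_ne_zero.mpr hne))
  obtain ⟨y, hy0, hy⟩ := (Matrix.exists_mulVec_eq_zero_iff).mpr hdet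
  have heig : a *ᵥ y = z • y := by
    have h1 : (algebraMap ℂ (Matrix N N ℂ) z - a) *ᵥ y = z • y - a *ᵥ y := by
      rw [Matrix.sub_mulVec]
      congr 1
      rw [Algebra.algebraMap_eq_smul_one, Matrix.smul_mulVec, Matrix.one_mulVec]
    rw [h1] at hy
    exact (sub_eq_zero.mp hy).symm
  refine ⟨‖z‖, fun i => ‖y i‖, hz1, fun i => norm_nonneg _, ?_, ?_⟩
  · intro hcontra
    apply hy0
    funext i
    have := congrFun hcontra i
    simpa using this
  · intro i
    have h2 : (a *ᵥ y) i = z * y i := by rw [heig]; simp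
    calc ‖z‖ * ‖y i‖ = ‖(a *ᵥ y) i‖ := by rw [h2, norm_mul]
    _ = ‖∑ j, (M i j : ℂ) * y j‖ := by
        simp [Matrix.mulVec, dotProduct, ha, Matrix.map_apply]
    _ ≤ ∑ j, ‖(M i j : ℂ) * y j‖ := norm_sum_le _ _
    _ = ∑ j, M i j * ‖y j‖ := by
        refine Finset.sum_congr rfl fun j _ => ?_
        rw [norm_mul, Complex.norm_real, Real.norm_eq_abs, abs_of_nonneg (hM i j)]
    _ = (M *ᵥ (fun j => ‖y j‖)) i := rfl

end Spectral
end SIWS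

set_option maxHeartbeats 2000000 in
/-- the healthy state `0` is the unique equilibrium in `𝒟` iff
`ρ(D_f⁻¹ B_f) ≤ 1` (Corollary 1). -/
theorem siws_healthy_unique_iff {n m : ℕ} (hn : 0 < n) (hm : 0 < m)
    (δ : Fin n → ℝ) (δw : Fin m → ℝ)
    (B : Matrix (Fin n) (Fin n) ℝ) (Bw : Matrix (Fin n) (Fin m) ℝ)
    (Cw : Matrix (Fin m) (Fin n) ℝ) (Aw : Matrix (Fin m) (Fin m) ℝ)
    (hδ : ∀ i, 0 < δ i) (hδw : ∀ j, 0 < δw j)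
    (hB : ∀ i j, 0 ≤ B i j) (hBw : ∀ i j, 0 ≤ Bw i j) (hCw : ∀ i j, 0 ≤ Cw i j)
    (hAw : ∀ i j, i ≠ j → 0 ≤ Aw i j)
    (hAwcol : ∀ j, ∑ i, Aw i j = 0)
    (hirr : MatIrred (BfM B Bw Cw Aw)) :
    (∀ z : Fin n ⊕ Fin m → ℝ,
      (∀ i : Fin n, z (Sum.inl i) ∈ Set.Icc (0:ℝ) 1) →
      (∀ j : Fin m, 0 ≤ z (Sum.inr j)) →
      (-(DfM δ δw Aw) +
        ((1 : Matrix (Fin n ⊕ Fin m) (Fin n ⊕ Fin m) ℝ) - XzM z) * BfM B Bw Cw Aw) *ᵥ z = 0 →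
      z = 0) ↔
    specRad ((DfM δ δw Aw)⁻¹ * BfM B Bw Cw Aw) ≤ 1 := by
  classical
  have a0 : Fin n := ⟨0, hn⟩
  have b0 : Fin m := ⟨0, hm⟩
  haveI : Nonempty (Fin n) := ⟨a0⟩
  haveI : Nonempty (Fin m) := ⟨b0⟩
  haveI : Nonempty (Fin n ⊕ Fin m) := ⟨Sum.inl a0⟩
  set Bf := BfM B Bw Cw Aw with hBfdef
  set d : Fin n ⊕ Fin m → ℝ := Sum.elim δ (fun j => δw j - Aw j j) with hd
  have hAwdiag : ∀ j, Aw j j ≤ 0 := by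
    intro j
    have h1 : Aw j j + ∑ i ∈ Finset.univ.erase j, Aw i j = 0 := by
      rw [Finset.add_sum_erase Finset.univ (fun i => Aw i j) (Finset.mem_univ j)]
      exact hAwcol j
    have h2 : 0 ≤ ∑ i ∈ Finset.univ.erase j, Aw i j :=
      Finset.sum_nonneg fun i hi => hAw i j (Finset.ne_of_mem_erase hi)
    linarith
  have hdpos : ∀ i, 0 < d i := by
    rintro (a | b)
    · exact hδ a
    · have := hAwdiag b; have := hδw b; simp only [hd, Sum.elim_inr]; linarith
  have hDf : DfM δ δw Aw = Matrix.diagonal d := by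
    rw [DfM, Matrix.fromBlocks_diagonal]
  have hBfnn : ∀ i j, 0 ≤ Bf i j := by
    rintro (a | b) (a' | b') <;>
      simp only [hBfdef, BfM, Matrix.fromBlocks_apply₁₁, Matrix.fromBlocks_apply₁₂,
        Matrix.fromBlocks_apply₂₁, Matrix.fromBlocks_apply₂₂, Matrix.sub_apply,
        Matrix.diagonal_apply]
    · exact hB a a'
    · exact hBw a b'
    · exact hCw b a'
    · by_cases h : b = b'
      · subst h; simp
      · simp [h]; exact hAw b b' h
  have hDfinv : (DfM δ δw Aw)⁻¹ = Matrix.diagonal (fun i => (d i)⁻¹) := by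
    rw [hDf]
    apply Matrix.inv_eq_right_inv
    rw [Matrix.diagonal_mul_diagonal]
    have : (fun i => d i * (d i)⁻¹) = fun _ => (1:ℝ) :=
      funext fun i => mul_inv_cancel₀ (ne_of_gt (hdpos i))
    rw [this, Matrix.diagonal_one]
  set C := (DfM δ δw Aw)⁻¹ * Bf with hCdef
  have hCapply : ∀ i j, C i j = (d i)⁻¹ * Bf i j := by
    intro i j
    rw [hCdef, hDfinv, Matrix.diagonal_mul]
  have hCnn : ∀ i j, 0 ≤ C i j := fun i j => by
    rw [hCapply]
    exact mul_nonneg (inv_nonneg.mpr (le_of_lt (hdpos i))) (hBfnn i j)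
  have hCmulVec : ∀ (w : Fin n ⊕ Fin m → ℝ) i, (C *ᵥ w) i = (d i)⁻¹ * ((Bf *ᵥ w) i) := by
    intro w i
    simp only [Matrix.mulVec, dotProduct, hCapply, Finset.mul_sum]
    exact Finset.sum_congr rfl fun j _ => by ring
  set χ : (Fin n ⊕ Fin m → ℝ) → (Fin n ⊕ Fin m) → ℝ :=
    fun z => Sum.elim (fun a => z (Sum.inl a)) (fun _ => (0:ℝ)) with hχ
  have hEq : ∀ z : Fin n ⊕ Fin m → ℝ,
      ((-(DfM δ δw Aw) +
        ((1 : Matrix (Fin n ⊕ Fin m) (Fin n ⊕ Fin m) ℝ) - XzM z) * Bf) *ᵥ z = 0) ↔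
      (∀ i, d i * z i = (1 - χ z i) * ((Bf *ᵥ z) i)) := by
    intro z
    have hXz : XzM z = Matrix.diagonal (χ z) := rfl
    have e1 : (-(DfM δ δw Aw) +
        ((1 : Matrix (Fin n ⊕ Fin m) (Fin n ⊕ Fin m) ℝ) - XzM z) * Bf) *ᵥ z
        = -(Matrix.diagonal d *ᵥ z) +
          ((Bf *ᵥ z) - Matrix.diagonal (χ z) *ᵥ (Bf *ᵥ z)) := by
      rw [Matrix.add_mulVec, Matrix.neg_mulVec, hDf, ← Matrix.mulVec_mulVec,
        Matrix.sub_mulVec, Matrix.one_mulVec, hXz]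
    rw [e1, funext_iff]
    refine forall_congr' fun i => ?_
    simp only [Pi.add_apply, Pi.neg_apply, Pi.sub_apply, Pi.zero_apply,
      Matrix.mulVec_diagonal]
    constructor
    · intro h
      have hx : (1 - χ z i) * ((Bf *ᵥ z) i)
          = (Bf *ᵥ z) i - χ z i * (Bf *ᵥ z) i := by ring
      linarith
    · intro h
      have hx : (1 - χ z i) * ((Bf *ᵥ z) i)
          = (Bf *ᵥ z) i - χ z i * (Bf *ᵥ z) i := by ring
      linarith
  constructor
  · -- uniqueness → ρ ≤ 1
    intro huniq
    by_contra hgt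
    push_neg at hgt
    obtain ⟨r, v, hr1, hvnn, hvne, hvineq⟩ := SIWS.exists_vec_of_one_lt_specRad hCnn hgt
    have hrpos : (0:ℝ) < r := lt_trans one_pos hr1
    have hBfv : ∀ i, r * v i * d i ≤ (Bf *ᵥ v) i := by
      intro i
      have h1 := hvineq i
      rw [hCmulVec, inv_mul_eq_div] at h1
      exact (le_div_iff₀ (hdpos i)).mp h1
    set c : Fin n ⊕ Fin m → ℝ := Sum.elim (fun _ => (1:ℝ)) (fun _ => (0:ℝ)) with hc
    have hc01 : ∀ i, 0 ≤ c i ∧ c i ≤ 1 := by rintro (a|b) <;> simp [hc]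
    have hχc : ∀ (z : Fin n ⊕ Fin m → ℝ) i, χ z i = c i * z i := by
      intro z i; rcases i with a | b <;> simp [hχ, hc]
    set T : (Fin n ⊕ Fin m → ℝ) → (Fin n ⊕ Fin m → ℝ) :=
      fun z i => (Bf *ᵥ z) i / (d i + c i * (Bf *ᵥ z) i) with hT
    have hden : ∀ (z : Fin n ⊕ Fin m → ℝ), (∀ i, 0 ≤ z i) →
        ∀ i, 0 < d i + c i * (Bf *ᵥ z) i := by
      intro z hz i
      have h1 := SIWS.mulVec_nonneg hBfnn hz i
      have h2 := (hc01 i).1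
      nlinarith [hdpos i]
    have hTnn : ∀ z, (∀ i, 0 ≤ z i) → ∀ i, 0 ≤ T z i := by
      intro z hz i
      exact div_nonneg (SIWS.mulVec_nonneg hBfnn hz i) (le_of_lt (hden z hz i))
    have hTmono : ∀ z z', (∀ i, 0 ≤ z i) → (∀ i, z i ≤ z' i) → ∀ i, T z i ≤ T z' i := by
      intro z z' hz hzz' i
      have hz' : ∀ i, 0 ≤ z' i := fun i => le_trans (hz i) (hzz' i)
      have hb : 0 ≤ (Bf *ᵥ z) i := SIWS.mulVec_nonneg hBfnn hz i
      have hbb : (Bf *ᵥ z) i ≤ (Bf *ᵥ z') i := SIWS.mulVec_mono hBfnn hzz' i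
      have h1 := hden z hz i
      have h2 := hden z' hz' i
      simp only [hT]
      rw [div_le_div_iff₀ h1 h2]
      have h3 := (hc01 i).1
      nlinarith [hdpos i]
    have hTle1 : ∀ z, (∀ i, 0 ≤ z i) → ∀ a : Fin n, T z (Sum.inl a) ≤ 1 := by
      intro z hz a
      have hb : 0 ≤ (Bf *ᵥ z) (Sum.inl a) := SIWS.mulVec_nonneg hBfnn hz _
      simp only [hT]
      rw [div_le_one (hden z hz _)]
      have hca : c (Sum.inl a) = 1 := rfl
      rw [hca]
      nlinarith [hdpos (Sum.inl a)]
    set Vmax : ℝ := Finset.univ.sup' Finset.univ_nonempty v with hVmax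
    have hVmax0 : 0 ≤ Vmax := by
      obtain ⟨i, hi⟩ : ∃ i, v i ≠ 0 := by
        by_contra hcon; push_neg at hcon; exact hvne (funext hcon)
      exact le_trans (hvnn i) (Finset.le_sup' _ (Finset.mem_univ i))
    set ε : ℝ := (1 - 1/r) / (Vmax + 1) with hε
    have hr0 : (0:ℝ) < 1 - 1/r := by
      have h1 : 1/r < 1 := by rw [div_lt_one hrpos]; linarith
      linarith
    have hεpos : 0 < ε := div_pos hr0 (by linarith)
    have hεv : ∀ i, ε * v i ≤ 1 - 1/r := by
      intro i
      have hvi : v i ≤ Vmax := Finset.le_sup' _ (Finset.mem_univ i)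
      rw [hε, div_mul_eq_mul_div, div_le_iff₀ (by linarith : (0:ℝ) < Vmax + 1)]
      nlinarith [hvnn i]
    have hεv1 : ∀ i, ε * v i ≤ 1 := by
      intro i
      have h1 : 0 < 1/r := by positivity
      linarith [hεv i]
    set α : Fin n ⊕ Fin m → ℝ := fun i => ε * v i with hα
    have hαnn : ∀ i, 0 ≤ α i := fun i => mul_nonneg (le_of_lt hεpos) (hvnn i)
    have hBfα : ∀ i, (Bf *ᵥ α) i = ε * (Bf *ᵥ v) i := by
      intro i
      simp only [hα, Matrix.mulVec, dotProduct, Finset.mul_sum]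
      exact Finset.sum_congr rfl fun j _ => by ring
    have hstart : ∀ i, α i ≤ T α i := by
      intro i
      rcases eq_or_lt_of_le (hvnn i) with hvi | hvi
      · have hzero : α i = 0 := by simp only [hα]; rw [← hvi]; ring
        rw [hzero]; exact hTnn α hαnn i
      · have hb := hBfv i
        have hbpos : 0 < (Bf *ᵥ v) i :=
          lt_of_lt_of_le (mul_pos (mul_pos hrpos hvi) (hdpos i)) hb
        have hdeni := hden α hαnn i
        simp only [hT]
        rw [le_div_iff₀ hdeni, hBfα]
        have key : v i * d i + c i * (ε * v i) * (Bf *ᵥ v) i ≤ (Bf *ᵥ v) i := by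
          have h1 : v i * d i ≤ (Bf *ᵥ v) i / r := by
            rw [le_div_iff₀ hrpos]
            nlinarith [hb]
          have h2 : c i * (ε * v i) * (Bf *ᵥ v) i ≤ (1 - 1/r) * (Bf *ᵥ v) i := by
            have h2a := hεv i
            have h2b := (hc01 i).1
            have h2c := (hc01 i).2
            have hεvnn : 0 ≤ ε * v i := mul_nonneg (le_of_lt hεpos) (hvnn i)
            have s1 : c i * (ε * v i) ≤ ε * v i := by nlinarith
            have s2 : c i * (ε * v i) ≤ 1 - 1/r := le_trans s1 h2a
            exact mul_le_mul_of_nonneg_right s2 (le_of_lt hbpos)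
          have h3 : (Bf *ᵥ v) i / r + (1 - 1/r) * (Bf *ᵥ v) i = (Bf *ᵥ v) i := by
            field_simp
            ring
          linarith
        have hαi : α i = ε * v i := rfl
        calc α i * (d i + c i * (ε * (Bf *ᵥ v) i))
            = ε * (v i * d i + c i * (ε * v i) * (Bf *ᵥ v) i) := by rw [hαi]; ring
        _ ≤ ε * (Bf *ᵥ v) i := mul_le_mul_of_nonneg_left key (le_of_lt hεpos)
    set zs : ℕ → (Fin n ⊕ Fin m → ℝ) := fun k => T^[k] α with hzs
    have hzs0 : zs 0 = α := rfl
    have hzs_succ : ∀ k, zs (k+1) = T (zs k) := by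
      intro k; simp only [hzs, Function.iterate_succ_apply']
    have hbasic : ∀ k, (∀ i, 0 ≤ zs k i) ∧ (∀ i, zs k i ≤ zs (k+1) i) := by
      intro k
      induction k with
      | zero =>
        refine ⟨?_, ?_⟩
        · rw [hzs0]; exact hαnn
        · rw [hzs_succ 0, hzs0]; exact hstart
      | succ k ih =>
        refine ⟨?_, ?_⟩
        · rw [hzs_succ k]; exact hTnn _ ih.1
        · have ih2 := ih.2
          rw [hzs_succ k] at ih2
          rw [hzs_succ (k+1), hzs_succ k]
          exact hTmono _ _ ih.1 ih2
    have hmono : ∀ i, Monotone (fun k => zs k i) := by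
      intro i
      exact monotone_nat_of_le_succ fun k => (hbasic k).2 i
    have hnn : ∀ k i, 0 ≤ zs k i := fun k => (hbasic k).1
    have hx1 : ∀ k, ∀ a : Fin n, zs k (Sum.inl a) ≤ 1 := by
      intro k a
      cases k with
      | zero => rw [hzs0]; simp only [hα]; exact hεv1 (Sum.inl a)
      | succ k => rw [hzs_succ k]; exact hTle1 _ (hnn k) a
    -- bound on the w components
    set Φ : (Fin n ⊕ Fin m → ℝ) → ℝ := fun w => ∑ b, d (Sum.inr b) * w (Sum.inr b) with hΦ
    set c0 : ℝ := ∑ b : Fin m, ∑ a : Fin n, Cw b a with hc0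
    have hc0nn : 0 ≤ c0 := Finset.sum_nonneg fun b _ => Finset.sum_nonneg fun a _ => hCw b a
    have hdb : ∀ b : Fin m, 0 < δw b - Aw b b := fun b => hdpos (Sum.inr b)
    set θ : ℝ := Finset.univ.sup' Finset.univ_nonempty
      (fun b : Fin m => (- Aw b b) / (δw b - Aw b b)) with hθ
    have hθ0 : 0 ≤ θ := by
      rw [hθ]
      exact le_trans (div_nonneg (neg_nonneg.mpr (hAwdiag b0)) (le_of_lt (hdb b0)))
        (Finset.le_sup' (fun b : Fin m => (- Aw b b) / (δw b - Aw b b)) (Finset.mem_univ b0))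
    have hθ1 : θ < 1 := by
      rw [hθ, Finset.sup'_lt_iff]
      intro b _
      rw [div_lt_one (hdb b)]
      have := hδw b; linarith
    have hratio : ∀ b, - Aw b b ≤ θ * (δw b - Aw b b) := by
      intro b
      have h1 : (- Aw b b) / (δw b - Aw b b) ≤ θ := by
        rw [hθ]
        exact Finset.le_sup' (fun b : Fin m => (- Aw b b) / (δw b - Aw b b)) (Finset.mem_univ b)
      rw [div_le_iff₀ (hdb b)] at h1
      linarith [h1]
    have hBfinr : ∀ (w : Fin n ⊕ Fin m → ℝ) (b : Fin m), (Bf *ᵥ w) (Sum.inr b)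
        = (∑ a, Cw b a * w (Sum.inl a))
          + ∑ b', (Aw b b' - (if b = b' then Aw b b else 0)) * w (Sum.inr b') := by
      intro w b
      have h0 : (Bf *ᵥ w) (Sum.inr b) = ∑ j, Bf (Sum.inr b) j * w j := rfl
      rw [h0, Fintype.sum_sum_type]
      congr 1
    have hstep : ∀ k, Φ (zs (k+1)) ≤ c0 + θ * Φ (zs k) := by
      intro k
      have h1 : ∀ b, d (Sum.inr b) * zs (k+1) (Sum.inr b) = (Bf *ᵥ zs k) (Sum.inr b) := by
        intro b
        rw [hzs_succ k]
        have hcb : c (Sum.inr b) = 0 := rfl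
        simp only [hT, hcb, zero_mul, add_zero]
        have hdne : d (Sum.inr b) ≠ 0 := ne_of_gt (hdpos _)
        rw [mul_comm]
        exact div_mul_cancel₀ _ hdne
      have h2 : Φ (zs (k+1)) = ∑ b, (Bf *ᵥ zs k) (Sum.inr b) := by
        simp only [hΦ]
        exact Finset.sum_congr rfl fun b _ => h1 b
      rw [h2]
      have h3 : ∀ b, (Bf *ᵥ zs k) (Sum.inr b)
          = (∑ a, Cw b a * zs k (Sum.inl a))
            + ∑ b', (Aw b b' - (if b = b' then Aw b b else 0)) * zs k (Sum.inr b') :=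
        fun b => hBfinr (zs k) b
      calc ∑ b, (Bf *ᵥ zs k) (Sum.inr b)
          = (∑ b, ∑ a, Cw b a * zs k (Sum.inl a))
            + ∑ b, ∑ b', (Aw b b' - (if b = b' then Aw b b else 0)) * zs k (Sum.inr b') := by
            rw [← Finset.sum_add_distrib]
            exact Finset.sum_congr rfl fun b _ => h3 b
      _ ≤ c0 + θ * Φ (zs k) := by
          refine add_le_add ?_ ?_
          · rw [hc0]
            refine Finset.sum_le_sum fun b _ => Finset.sum_le_sum fun a _ => ?_
            have := hx1 k a
            nlinarith [hCw b a, hnn k (Sum.inl a)]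
          · rw [Finset.sum_comm]
            have h4 : ∀ b', ∑ b, (Aw b b' - (if b = b' then Aw b b else 0)) * zs k (Sum.inr b')
                = (- Aw b' b') * zs k (Sum.inr b') := by
              intro b'
              rw [← Finset.sum_mul]
              congr 1
              rw [Finset.sum_sub_distrib, hAwcol b', Finset.sum_ite_eq' Finset.univ b' (fun b => Aw b b)]
              simp
            calc ∑ b', ∑ b, (Aw b b' - (if b = b' then Aw b b else 0)) * zs k (Sum.inr b')
                = ∑ b', (- Aw b' b') * zs k (Sum.inr b') :=
                  Finset.sum_congr rfl fun b' _ => h4 b'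
            _ ≤ ∑ b', θ * ((δw b' - Aw b' b') * zs k (Sum.inr b')) := by
                refine Finset.sum_le_sum fun b' _ => ?_
                have h5 := hratio b'
                have h6 := hnn k (Sum.inr b')
                nlinarith
            _ = θ * Φ (zs k) := by
                simp only [hΦ, Finset.mul_sum]
                exact Finset.sum_congr rfl fun b' _ => by
                  have hdb' : d (Sum.inr b') = δw b' - Aw b' b' := rfl
                  rw [hdb']
    set Φmax : ℝ := max (Φ α) (c0 / (1 - θ)) with hΦmax
    have hΦbd : ∀ k, Φ (zs k) ≤ Φmax := by
      intro k
      induction k with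
      | zero => rw [hzs0]; exact le_max_left _ _
      | succ k ih =>
        have h2 := hstep k
        have h3 : c0 + θ * Φ (zs k) ≤ c0 + θ * Φmax := by nlinarith [hθ0]
        have h4 : c0 + θ * Φmax ≤ Φmax := by
          have h5 : c0 / (1 - θ) ≤ Φmax := le_max_right _ _
          rw [div_le_iff₀ (by linarith : (0:ℝ) < 1 - θ)] at h5
          nlinarith
        linarith
    have hwbd : ∀ k b, zs k (Sum.inr b) ≤ Φmax / d (Sum.inr b) := by
      intro k b
      have h1 : d (Sum.inr b) * zs k (Sum.inr b) ≤ Φ (zs k) := by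
        refine Finset.single_le_sum (f := fun b => d (Sum.inr b) * zs k (Sum.inr b))
          (fun b' _ => mul_nonneg (le_of_lt (hdpos _)) (hnn k _)) (Finset.mem_univ b)
      rw [le_div_iff₀ (hdpos (Sum.inr b))]
      calc zs k (Sum.inr b) * d (Sum.inr b) = d (Sum.inr b) * zs k (Sum.inr b) := by ring
      _ ≤ Φ (zs k) := h1
      _ ≤ Φmax := hΦbd k
    set Bd : Fin n ⊕ Fin m → ℝ :=
      Sum.elim (fun _ => (1:ℝ)) (fun b => Φmax / d (Sum.inr b)) with hBd
    have hbd : ∀ k i, zs k i ≤ Bd i := by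
      intro k i
      rcases i with a | b
      · exact hx1 k a
      · exact hwbd k b
    have hbdd : ∀ i, BddAbove (Set.range fun k => zs k i) := by
      intro i
      exact ⟨Bd i, by rintro x ⟨k, rfl⟩; exact hbd k i⟩
    set zst : Fin n ⊕ Fin m → ℝ := fun i => ⨆ k, zs k i with hzst
    have htend : ∀ i, Filter.Tendsto (fun k => zs k i) Filter.atTop (nhds (zst i)) :=
      fun i => tendsto_atTop_ciSup (hmono i) (hbdd i)
    have hge : ∀ k i, zs k i ≤ zst i := fun k i => le_ciSup (hbdd i) k
    have hzstnn : ∀ i, 0 ≤ zst i := fun i => le_trans (hnn 0 i) (hge 0 i)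
    have hzst1 : ∀ a : Fin n, zst (Sum.inl a) ≤ 1 := fun a => ciSup_le fun k => hx1 k a
    have hBtend : ∀ i, Filter.Tendsto (fun k => (Bf *ᵥ zs k) i) Filter.atTop
        (nhds ((Bf *ᵥ zst) i)) := by
      intro i
      have e1 : ∀ k, (Bf *ᵥ zs k) i = ∑ j, Bf i j * zs k j := fun k => rfl
      have e2 : (Bf *ᵥ zst) i = ∑ j, Bf i j * zst j := rfl
      simp only [e1, e2]
      exact tendsto_finset_sum _ fun j _ => (htend j).const_mul _
    have hfix : ∀ i, T zst i = zst i := by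
      intro i
      have h1 : Filter.Tendsto (fun k => T (zs k) i) Filter.atTop (nhds (T zst i)) := by
        simp only [hT]
        exact Filter.Tendsto.div (hBtend i)
          (tendsto_const_nhds.add ((hBtend i).const_mul _))
          (ne_of_gt (hden zst hzstnn i))
      have h2 : Filter.Tendsto (fun k => T (zs k) i) Filter.atTop (nhds (zst i)) := by
        have h3 : (fun k => T (zs k) i) = fun k => zs (k+1) i := by
          funext k; rw [← hzs_succ k]
        rw [h3]
        exact (htend i).comp (Filter.tendsto_add_atTop_nat 1)
      exact tendsto_nhds_unique h1 h2
    have hequil : ∀ i, d i * zst i = (1 - χ zst i) * ((Bf *ᵥ zst) i) := by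
      intro i
      have h1 := hfix i
      simp only [hT] at h1
      rw [div_eq_iff (ne_of_gt (hden zst hzstnn i))] at h1
      rw [hχc zst i]
      linear_combination - h1
    have hzst_eq := huniq zst (fun a => ⟨hzstnn (Sum.inl a), hzst1 a⟩)
      (fun b => hzstnn (Sum.inr b)) ((hEq zst).mpr hequil)
    obtain ⟨j₀, hj₀⟩ : ∃ j, v j ≠ 0 := by
      by_contra hcon; push_neg at hcon; exact hvne (funext hcon)
    have hvj₀ : 0 < v j₀ := lt_of_le_of_ne (hvnn j₀) (Ne.symm hj₀)
    have hfin : 0 < zst j₀ := lt_of_lt_of_le (mul_pos hεpos hvj₀) (hge 0 j₀)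
    rw [hzst_eq] at hfin
    simp at hfin
  · -- ρ ≤ 1 → uniqueness
    intro hle z hzx hzw heq
    by_contra hzne
    have hznn : ∀ i, 0 ≤ z i := by
      rintro (a | b)
      · exact (hzx a).1
      · exact hzw b
    have hcomp := (hEq z).mp heq
    have hcomp' : ∀ i, (Bf *ᵥ z) i = d i * z i + χ z i * (Bf *ᵥ z) i := by
      intro i
      have hx : (1 - χ z i) * ((Bf *ᵥ z) i)
          = (Bf *ᵥ z) i - χ z i * (Bf *ᵥ z) i := by ring
      have := hcomp i
      linarith
    have hBfznn : ∀ i, 0 ≤ (Bf *ᵥ z) i := SIWS.mulVec_nonneg hBfnn hznn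
    have hzero_closed : ∀ i, z i = 0 → (Bf *ᵥ z) i = 0 := by
      rintro (a | b) h0
      · have := hcomp' (Sum.inl a)
        simp only [hχ, Sum.elim_inl] at this
        rw [h0] at this
        linarith [this]
      · have := hcomp' (Sum.inr b)
        simp only [hχ, Sum.elim_inr] at this
        rw [h0] at this
        linarith [this]
    have hclaim : ∀ k : ℕ, ∀ i, z i = 0 → ((Bf ^ k) *ᵥ z) i = 0 := by
      intro k
      induction k with
      | zero => intro i h0; simpa [Matrix.one_mulVec] using h0
      | succ k ih =>
        intro i h0
        have h1 : (Bf ^ (k+1)) *ᵥ z = Bf *ᵥ ((Bf ^ k) *ᵥ z) := by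
          rw [Matrix.mulVec_mulVec, ← pow_succ']
        rw [h1]
        have hshow : (Bf *ᵥ ((Bf ^ k) *ᵥ z)) i = ∑ j, Bf i j * ((Bf ^ k) *ᵥ z) j := rfl
        rw [hshow]
        have hBfz0 : (Bf *ᵥ z) i = 0 := hzero_closed i h0
        have hterms : ∀ j, Bf i j * z j = 0 := by
          have hsum : ∑ j, Bf i j * z j = 0 := hBfz0
          intro j
          have := (Finset.sum_eq_zero_iff_of_nonneg
            (fun j _ => mul_nonneg (hBfnn i j) (hznn j))).mp hsum j (Finset.mem_univ j)
          exact this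
        refine Finset.sum_eq_zero fun j _ => ?_
        by_cases hBij : Bf i j = 0
        · rw [hBij, zero_mul]
        · have hzj : z j = 0 := by
            have := hterms j
            rcases mul_eq_zero.mp this with h | h
            · exact absurd h hBij
            · exact h
          rw [ih j hzj, mul_zero]
    have hzpos : ∀ i, 0 < z i := by
      intro i
      rcases lt_or_eq_of_le (hznn i) with h | h
      · exact h
      · exfalso
        obtain ⟨j₀, hj₀⟩ : ∃ j, z j ≠ 0 := by
          by_contra hc
          push_neg at hc
          exact hzne (funext hc)
        have hj₀pos : 0 < z j₀ := lt_of_le_of_ne (hznn j₀) (Ne.symm hj₀)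
        obtain ⟨k, hk1, hkpos⟩ := hirr i j₀
        have h0 : ((Bf ^ k) *ᵥ z) i = 0 := hclaim k i h.symm
        have hge : (Bf ^ k) i j₀ * z j₀ ≤ ((Bf ^ k) *ᵥ z) i := by
          refine Finset.single_le_sum (f := fun j => (Bf ^ k) i j * z j)
            (fun j _ => mul_nonneg (SIWS.pow_nonneg'' hBfnn k i j) (hznn j))
            (Finset.mem_univ j₀)
        rw [h0] at hge
        nlinarith
    -- x components yield strict positivity of the "infection pressure"
    have hBfzpos : ∀ a : Fin n, 0 < (Bf *ᵥ z) (Sum.inl a) ∧ χ z (Sum.inl a) < 1 := by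
      intro a
      have hc := hcomp (Sum.inl a)
      have hχa : χ z (Sum.inl a) = z (Sum.inl a) := rfl
      have hpos : 0 < d (Sum.inl a) * z (Sum.inl a) :=
        mul_pos (hdpos _) (hzpos _)
      rw [hc] at hpos
      have h1 : 0 < (Bf *ᵥ z) (Sum.inl a) := by
        rcases lt_or_eq_of_le (hBfznn (Sum.inl a)) with h | h
        · exact h
        · exfalso; rw [← h] at hpos; linarith
      have h2 : 0 < 1 - χ z (Sum.inl a) := by
        by_contra hc2
        push_neg at hc2
        nlinarith
      exact ⟨h1, by linarith⟩
    set p : Fin n ⊕ Fin m → ℝ := fun i => χ z i * (Bf *ᵥ z) i / d i with hp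
    have hpnn : ∀ i, 0 ≤ p i := by
      rintro (a | b)
      · exact div_nonneg (mul_nonneg (hznn _) (hBfznn _)) (le_of_lt (hdpos _))
      · simp [hp, hχ]
    have hpinl : 0 < p (Sum.inl a0) := by
      have h1 := (hBfzpos a0).1
      have h2 := hzpos (Sum.inl a0)
      have hχa : χ z (Sum.inl a0) = z (Sum.inl a0) := rfl
      rw [hp]
      simp only [hχa]
      exact div_pos (mul_pos h2 h1) (hdpos _)
    have hCz : ∀ i, (C *ᵥ z) i = z i + p i := by
      intro i
      rw [hCmulVec, hcomp' i]
      have hdne : d i ≠ 0 := ne_of_gt (hdpos i)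
      simp only [hp]
      field_simp
    -- C is irreducible
    set ε₀ : ℝ := Finset.univ.inf' Finset.univ_nonempty (fun i => (d i)⁻¹) with hε₀
    have hε₀pos : 0 < ε₀ := by
      rw [hε₀, Finset.lt_inf'_iff]
      exact fun i _ => inv_pos.mpr (hdpos i)
    have hCge : ∀ i j, (ε₀ • Bf) i j ≤ C i j := by
      intro i j
      rw [hCapply, Matrix.smul_apply, smul_eq_mul]
      exact mul_le_mul_of_nonneg_right
        (Finset.inf'_le _ (Finset.mem_univ i)) (hBfnn i j)
    have hεBfnn : ∀ i j, 0 ≤ (ε₀ • Bf) i j := fun i j => by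
      rw [Matrix.smul_apply, smul_eq_mul]
      exact mul_nonneg (le_of_lt hε₀pos) (hBfnn i j)
    have hCirr : ∀ i j, ∃ k : ℕ, 1 ≤ k ∧ 0 < (C ^ k) i j := by
      intro i j
      obtain ⟨k, hk1, hkpos⟩ := hirr i j
      refine ⟨k, hk1, ?_⟩
      have h1 : ((ε₀ • Bf) ^ k) i j ≤ (C ^ k) i j :=
        SIWS.pow_le_pow_entrywise hεBfnn hCge k i j
      have h2 : ((ε₀ • Bf) ^ k) i j = ε₀ ^ k * (Bf ^ k) i j := by
        rw [smul_pow, Matrix.smul_apply, smul_eq_mul]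
      have h3 : 0 < ε₀ ^ k * (Bf ^ k) i j :=
        mul_pos (pow_pos hε₀pos k) hkpos
      rw [h2] at h1
      linarith
    -- telescoping
    choose kf hkf1 hkfpos using fun i => hCirr i (Sum.inl a0)
    set K : ℕ := Finset.univ.sup kf with hK
    have htel : ∀ t : ℕ, (C ^ t) *ᵥ z = z + (∑ l ∈ Finset.range t, C ^ l) *ᵥ p := by
      intro t
      induction t with
      | zero => simp [Matrix.one_mulVec, Matrix.zero_mulVec]
      | succ t ih =>
        have h1 : (C ^ (t+1)) *ᵥ z = C *ᵥ ((C ^ t) *ᵥ z) := by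
          rw [Matrix.mulVec_mulVec, ← pow_succ']
        rw [h1, ih, Matrix.mulVec_add]
        have h2 : C *ᵥ z = z + p := funext hCz
        rw [h2, Matrix.mulVec_mulVec]
        have h3 : (∑ l ∈ Finset.range (t+1), C ^ l) = C * (∑ l ∈ Finset.range t, C ^ l) + 1 :=
          geom_sum_succ
        rw [h3, Matrix.add_mulVec, Matrix.one_mulVec]
        abel
    set q : Fin n ⊕ Fin m → ℝ := (∑ l ∈ Finset.range (K+1), C ^ l) *ᵥ p with hq
    have hqpos : ∀ i, 0 < q i := by
      intro i
      rw [hq, SIWS.sum_mulVec']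
      refine Finset.sum_pos' (fun l _ => SIWS.mulVec_nonneg (SIWS.pow_nonneg'' hCnn l) hpnn i)
        ⟨kf i, Finset.mem_range.mpr (Nat.lt_succ_of_le (Finset.le_sup (Finset.mem_univ i))), ?_⟩
      have hge : (C ^ (kf i)) i (Sum.inl a0) * p (Sum.inl a0) ≤ ((C ^ (kf i)) *ᵥ p) i :=
        Finset.single_le_sum (f := fun j => (C ^ (kf i)) i j * p j)
          (fun j _ => mul_nonneg (SIWS.pow_nonneg'' hCnn (kf i) i j) (hpnn j))
          (Finset.mem_univ (Sum.inl a0))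
      have := mul_pos (hkfpos i) hpinl
      linarith
    set zmax : ℝ := Finset.univ.sup' Finset.univ_nonempty z with hzmax
    set qmin : ℝ := Finset.univ.inf' Finset.univ_nonempty q with hqmin
    have hzmaxpos : 0 < zmax :=
      lt_of_lt_of_le (hzpos (Sum.inl a0)) (Finset.le_sup' _ (Finset.mem_univ _))
    have hqminpos : 0 < qmin := by
      rw [hqmin, Finset.lt_inf'_iff]
      exact fun i _ => hqpos i
    set r : ℝ := 1 + qmin / zmax with hr
    have hr1 : 1 < r := by
      rw [hr]
      have := div_pos hqminpos hzmaxpos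
      linarith
    have hineq : ∀ i, r * z i ≤ ((C ^ (K+1)) *ᵥ z) i := by
      intro i
      have h1 : ((C ^ (K+1)) *ᵥ z) i = z i + q i := by
        rw [htel (K+1)]; simp [hq]
      rw [h1, hr]
      have h2 : qmin / zmax * z i ≤ qmin := by
        have hzi : z i ≤ zmax := Finset.le_sup' _ (Finset.mem_univ i)
        calc qmin / zmax * z i ≤ qmin / zmax * zmax :=
          mul_le_mul_of_nonneg_left hzi (le_of_lt (div_pos hqminpos hzmaxpos))
        _ = qmin := div_mul_cancel₀ _ (ne_of_gt hzmaxpos)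
      have h3 : qmin ≤ q i := Finset.inf'_le _ (Finset.mem_univ i)
      nlinarith [hznn i]
    have hspec : 1 < specRad C :=
      SIWS.one_lt_specRad_of_pow hCnn hznn hzne (Nat.succ_pos K) hr1 hineq
    rw [hCdef] at hspec
    exact absurd hle (not_le.mpr hspec)
end

section
/- Suppose Assumption 2 holds, B_f and B are irreducible, ρ(D_f^{-1}B_f) > 1, and ρ(D^{-1}B) > 1. Let ẑ = (x̂, ŵ) ∈ ℝ^{n+m} be any strictly positive equilibrium of the layered networked SIWS model (ẑ ≫ 0 and (−D_f + (I − X(ẑ)) B_f) ẑ = 0), and let x̃ ∈ ℝ^n be any equilibrium of the networked SIS model with 0 ≪ x̃ ≪ 1, i.e., (−D + (I − diag(x̃)) B) x̃ = 0. Then x̂ > x̃, i.e., x̂_i ≥ x̃_i for every i ∈ {1,…,n} and x̂ ≠ x̃. -/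
open Matrix

variable {n m : ℕ}

/-- the endemic level of the population nodes with shared resources
dominates the SIS endemic equilibrium without shared resources (Proposition 5). -/
theorem siws_endemic_larger_than_sis {n m : ℕ} (hn : 0 < n) (hm : 0 < m)
    (δ : Fin n → ℝ) (δw : Fin m → ℝ)
    (B : Matrix (Fin n) (Fin n) ℝ) (Bw : Matrix (Fin n) (Fin m) ℝ)
    (Cw : Matrix (Fin m) (Fin n) ℝ) (Aw : Matrix (Fin m) (Fin m) ℝ)
    (hδ : ∀ i, 0 < δ i) (hδw : ∀ j, 0 < δw j)
    (hB : ∀ i j, 0 ≤ B i j) (hBw : ∀ i j, 0 ≤ Bw i j) (hCw : ∀ i j, 0 ≤ Cw i j)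
    (hAw : ∀ i j, i ≠ j → 0 ≤ Aw i j)
    (hAwcol : ∀ j, ∑ i, Aw i j = 0)
    (hirrf : MatIrred (BfM B Bw Cw Aw)) (hirrB : MatIrred B)
    (hρf : 1 < specRad ((DfM δ δw Aw)⁻¹ * BfM B Bw Cw Aw))
    (hρB : 1 < specRad ((Matrix.diagonal δ)⁻¹ * B))
    (zh : Fin n ⊕ Fin m → ℝ)
    (hzh : ∀ i, 0 < zh i)
    (heqzh : (-(DfM δ δw Aw) +
      ((1 : Matrix (Fin n ⊕ Fin m) (Fin n ⊕ Fin m) ℝ) - XzM zh) * BfM B Bw Cw Aw) *ᵥ zh = 0)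
    (xt : Fin n → ℝ)
    (hxt : ∀ i, 0 < xt i ∧ xt i < 1)
    (heqxt : (-(Matrix.diagonal δ) +
      ((1 : Matrix (Fin n) (Fin n) ℝ) - Matrix.diagonal xt) * B) *ᵥ xt = 0) :
    (∀ i : Fin n, xt i ≤ zh (Sum.inl i)) ∧ (fun i : Fin n => zh (Sum.inl i)) ≠ xt := by
  -- componentwise equations
  have hsis : ∀ i, δ i * xt i = (1 - xt i) * ∑ a, B i a * xt a := by
    intro i
    have h := congrFun heqxt i
    simp [Matrix.mulVec, dotProduct, Matrix.add_apply, Matrix.sub_apply, Matrix.neg_apply,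
      Matrix.mul_apply, Matrix.diagonal, Matrix.one_apply, Finset.sum_add_distrib,
      add_mul, sub_mul, Finset.sum_sub_distrib] at h
    rw [Finset.mul_sum]
    simp only [sub_mul, Finset.sum_sub_distrib, ← mul_assoc, one_mul]
    linarith
  have hpop : ∀ i, δ i * zh (Sum.inl i) = (1 - zh (Sum.inl i)) *
      ((∑ a, B i a * zh (Sum.inl a)) + ∑ b, Bw i b * zh (Sum.inr b)) := by
    intro i
    have h := congrFun heqzh (Sum.inl i)
    simp [Matrix.mulVec, dotProduct, Matrix.add_apply, Matrix.sub_apply, Matrix.neg_apply,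
      Matrix.mul_apply, Matrix.diagonal, Matrix.one_apply, Fintype.sum_sum_type,
      BfM, DfM, XzM, Matrix.fromBlocks_apply₁₁, Matrix.fromBlocks_apply₁₂,
      Finset.sum_add_distrib, add_mul, sub_mul, Finset.sum_sub_distrib] at h
    rw [mul_add, Finset.mul_sum, Finset.mul_sum]
    simp only [sub_mul, Finset.sum_sub_distrib, ← mul_assoc, one_mul]
    linarith
  have hbxnn : ∀ i, (0:ℝ) ≤ ∑ a, B i a * zh (Sum.inl a) := fun i =>
    Finset.sum_nonneg fun a _ => mul_nonneg (hB i a) (hzh _).le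
  have hbwnn : ∀ i, (0:ℝ) ≤ ∑ b, Bw i b * zh (Sum.inr b) := fun i =>
    Finset.sum_nonneg fun b _ => mul_nonneg (hBw i b) (hzh _).le
  have hxlt1 : ∀ i, zh (Sum.inl i) < 1 := by
    intro i
    by_contra hcon
    push_neg at hcon
    have h1 : 0 < δ i * zh (Sum.inl i) := mul_pos (hδ i) (hzh _)
    rw [hpop i] at h1
    nlinarith [hbxnn i, hbwnn i]
  have hle : ∀ i : Fin n, xt i ≤ zh (Sum.inl i) := by
    by_contra hcon
    push_neg at hcon
    obtain ⟨i1, hi1⟩ := hcon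
    obtain ⟨i0, -, hmax⟩ := Finset.exists_max_image Finset.univ
      (fun i => xt i / zh (Sum.inl i)) ⟨i1, Finset.mem_univ i1⟩
    set θ := xt i0 / zh (Sum.inl i0) with hθdef
    have hθ1 : 1 < θ :=
      lt_of_lt_of_le ((one_lt_div (hzh (Sum.inl i1))).2 hi1) (hmax i1 (Finset.mem_univ i1))
    have hθle : ∀ a, xt a ≤ θ * zh (Sum.inl a) := by
      intro a
      have := hmax a (Finset.mem_univ a)
      rw [div_le_iff₀ (hzh (Sum.inl a))] at this
      linarith [this]
    have hkey : xt i0 = θ * zh (Sum.inl i0) := by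
      rw [hθdef, div_mul_cancel₀ _ (hzh (Sum.inl i0)).ne']
    have hBsx : ∑ a, B i0 a * xt a ≤ θ * ∑ a, B i0 a * zh (Sum.inl a) := by
      rw [Finset.mul_sum]
      refine Finset.sum_le_sum fun a _ => ?_
      calc B i0 a * xt a ≤ B i0 a * (θ * zh (Sum.inl a)) :=
            mul_le_mul_of_nonneg_left (hθle a) (hB i0 a)
        _ = θ * (B i0 a * zh (Sum.inl a)) := by ring
    have hlt : zh (Sum.inl i0) < xt i0 := by
      have := hzh (Sum.inl i0)
      nlinarith
    have h1 : δ i0 * xt i0 ≤ (1 - xt i0) * (θ * ∑ a, B i0 a * zh (Sum.inl a)) := by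
      rw [hsis i0]
      exact mul_le_mul_of_nonneg_left hBsx (by linarith [(hxt i0).2])
    have hθpos : (0:ℝ) < θ := by linarith
    have h2 : δ i0 * zh (Sum.inl i0) ≤ (1 - xt i0) * ∑ a, B i0 a * zh (Sum.inl a) := by
      refine le_of_mul_le_mul_left ?_ hθpos
      calc θ * (δ i0 * zh (Sum.inl i0)) = δ i0 * xt i0 := by rw [hkey]; ring
        _ ≤ (1 - xt i0) * (θ * ∑ a, B i0 a * zh (Sum.inl a)) := h1
        _ = θ * ((1 - xt i0) * ∑ a, B i0 a * zh (Sum.inl a)) := by ring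
    have h3 := hpop i0
    have hx1 : zh (Sum.inl i0) < 1 := hxlt1 i0
    have hSpos : 0 < ∑ a, B i0 a * zh (Sum.inl a) := by
      nlinarith [mul_pos (hδ i0) (hzh (Sum.inl i0)), hbxnn i0, (hxt i0).2, (hxt i0).1,
        mul_le_of_le_one_left (hbxnn i0) (by linarith [(hxt i0).1] : (1:ℝ) - xt i0 ≤ 1)]
    have hlow : (1 - zh (Sum.inl i0)) * ∑ a, B i0 a * zh (Sum.inl a) ≤ δ i0 * zh (Sum.inl i0) := by
      nlinarith [mul_nonneg (by linarith : (0:ℝ) ≤ 1 - zh (Sum.inl i0)) (hbwnn i0)]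
    nlinarith [mul_pos (by linarith : (0:ℝ) < xt i0 - zh (Sum.inl i0)) hSpos]
  refine ⟨hle, ?_⟩
  intro heq
  have hxe : ∀ i, zh (Sum.inl i) = xt i := fun i => congrFun heq i
  have hBw0 : ∀ i b, Bw i b = 0 := by
    intro i b
    have h1 := hpop i
    have h2 := hsis i
    simp only [hxe] at h1
    have hne : (1 : ℝ) - xt i ≠ 0 := by linarith [(hxt i).2]
    have hsum : ∑ b', Bw i b' * zh (Sum.inr b') = 0 := by
      have := mul_left_cancel₀ hne (by linarith : (1 - xt i) *
        ((∑ a, B i a * xt a) + ∑ b', Bw i b' * zh (Sum.inr b')) = (1 - xt i) * ∑ a, B i a * xt a)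
      linarith
    have := (Finset.sum_eq_zero_iff_of_nonneg
      (fun b' _ => mul_nonneg (hBw i b') (hzh (Sum.inr b')).le)).1 hsum b (Finset.mem_univ b)
    exact (mul_eq_zero.1 this).resolve_right (hzh (Sum.inr b)).ne'
  have hpow : ∀ k : ℕ, ∀ (i : Fin n) (j : Fin m),
      ((BfM B Bw Cw Aw) ^ k) (Sum.inl i) (Sum.inr j) = 0 := by
    intro k
    induction k with
    | zero => intro i j; simp [Matrix.one_apply]
    | succ k ih =>
      intro i j
      rw [pow_succ, Matrix.mul_apply, Fintype.sum_sum_type]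
      have h1 : ∀ a : Fin n, (BfM B Bw Cw Aw) (Sum.inl a) (Sum.inr j) = 0 := by
        intro a; simp [BfM, hBw0]
      simp [h1, ih]
  obtain ⟨k, hk1, hkpos⟩ := hirrf (Sum.inl ⟨0, hn⟩) (Sum.inr ⟨0, hm⟩)
  rw [hpow k] at hkpos
  exact lt_irrefl 0 hkpos
end

section
/- Suppose Assumption 2 holds and B_f is irreducible. If z̃ = (x̃, w̃) ∈ ℝ^{n+m} satisfies z̃ ≫ 0, x̃_i < 1 for all i ∈ {1,…,n}, and (−D_f + (I − X(z̃)) B_f) z̃ = 0, then ρ((I − X(z̃)) D_f^{-1} B_f) = 1. -/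
open Matrix

variable {n m : ℕ}

/-- Auxiliary: a nonnegative real matrix with a strictly positive eigenvector for
eigenvalue `1` has spectral radius `1`. -/
lemma aux_specRad_eq_one_of_pos_eigenvector {N : Type*} [Fintype N] [DecidableEq N] [Nonempty N]
    (A : Matrix N N ℝ) (hA : ∀ i j, 0 ≤ A i j) (v : N → ℝ) (hv : ∀ i, 0 < v i)
    (hAv : A *ᵥ v = v) :
    spectralRadius ℂ (A.map (algebraMap ℝ ℂ)) = 1 := by
  set M : Matrix N N ℂ := A.map (algebraMap ℝ ℂ) with hM
  -- 1 is in the spectrum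
  have hmem : (1 : ℂ) ∈ spectrum ℂ M := by
    rw [spectrum.mem_iff]
    intro hunit
    rw [Matrix.isUnit_iff_isUnit_det, isUnit_iff_ne_zero] at hunit
    apply hunit
    rw [← Matrix.exists_mulVec_eq_zero_iff]
    refine ⟨fun i => (v i : ℂ), ?_, ?_⟩
    · intro h0
      have := congrFun h0 (Classical.arbitrary N)
      simp only [Pi.zero_apply, Complex.ofReal_eq_zero] at this
      exact (hv _).ne' this
    · funext i
      have hmv : (M *ᵥ fun j => (v j : ℂ)) i = ((A *ᵥ v) i : ℂ) :=
        (RingHom.map_mulVec (algebraMap ℝ ℂ) A v i).symm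
      simp only [_root_.map_one, Matrix.sub_mulVec, Pi.sub_apply, Matrix.one_mulVec, hmv, hAv,
        Pi.zero_apply, sub_self]
  -- every spectral value has norm ≤ 1
  have hbound : ∀ k ∈ spectrum ℂ M, ‖k‖ ≤ 1 := by
    intro k hk
    rw [spectrum.mem_iff] at hk
    have hdet : (algebraMap ℂ (Matrix N N ℂ) k - M).det = 0 := by
      by_contra hd
      exact hk (Matrix.isUnit_iff_isUnit_det _ |>.mpr (isUnit_iff_ne_zero.mpr hd))
    obtain ⟨u, hu0, hu⟩ := Matrix.exists_mulVec_eq_zero_iff.mpr hdet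
    have huk : M *ᵥ u = k • u := by
      funext i
      have := congrFun hu i
      simp only [Matrix.sub_mulVec, Pi.sub_apply, Algebra.algebraMap_eq_smul_one,
        Matrix.smul_mulVec, Matrix.one_mulVec, Pi.zero_apply, Pi.smul_apply,
        smul_eq_mul] at this
      rw [Pi.smul_apply, smul_eq_mul]
      linear_combination -this
    obtain ⟨i₀, hi₀⟩ := Finite.exists_max (fun j => ‖u j‖ / v j)
    set c : ℝ := ‖u i₀‖ / v i₀ with hc
    have hle : ∀ j, ‖u j‖ ≤ c * v j := fun j =>
      (div_le_iff₀ (hv j)).mp (hi₀ j)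
    have hcpos : 0 < c := by
      obtain ⟨j, hj⟩ := Function.ne_iff.mp hu0
      calc 0 < ‖u j‖ / v j := div_pos (norm_pos_iff.mpr hj) (hv j)
        _ ≤ c := hi₀ j
    have hui₀ : ‖u i₀‖ = c * v i₀ := (div_mul_cancel₀ _ (hv i₀).ne').symm
    have hpos : 0 < ‖u i₀‖ := by rw [hui₀]; exact mul_pos hcpos (hv i₀)
    have key : ‖k‖ * ‖u i₀‖ ≤ ‖u i₀‖ := by
      have h1 : ‖k‖ * ‖u i₀‖ = ‖(M *ᵥ u) i₀‖ := by
        rw [huk]; simp [norm_mul]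
      rw [h1]
      have h2 : ‖(M *ᵥ u) i₀‖ ≤ ∑ j, A i₀ j * ‖u j‖ := by
        refine (norm_sum_le _ _).trans ?_
        apply Finset.sum_le_sum
        intro j _
        have hMe : M i₀ j * u j = (A i₀ j : ℂ) * u j := rfl
        rw [hMe, norm_mul, Complex.norm_real, Real.norm_eq_abs, abs_of_nonneg (hA i₀ j)]
      refine h2.trans ?_
      calc ∑ j, A i₀ j * ‖u j‖ ≤ ∑ j, A i₀ j * (c * v j) := by
            apply Finset.sum_le_sum; intro j _
            exact mul_le_mul_of_nonneg_left (hle j) (hA i₀ j)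
        _ = c * ∑ j, A i₀ j * v j := by rw [Finset.mul_sum]; apply Finset.sum_congr rfl; intros; ring
        _ = c * (A *ᵥ v) i₀ := rfl
        _ = c * v i₀ := by rw [hAv]
        _ = ‖u i₀‖ := hui₀.symm
    exact le_of_mul_le_mul_right (by linarith [key]) hpos
  -- conclude
  rw [spectralRadius]
  apply le_antisymm
  · refine iSup₂_le fun k hk => ?_
    have := hbound k hk
    simpa [← ENNReal.coe_one, ENNReal.coe_le_coe, ← NNReal.coe_le_coe] using this
  · have h1 : (1 : ENNReal) = (‖(1:ℂ)‖₊ : ENNReal) := by simp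
    rw [h1]
    exact le_iSup₂ (f := fun k (_ : k ∈ spectrum ℂ M) => (‖k‖₊ : ENNReal)) 1 hmem

/-- at a strictly positive equilibrium `z̃` with `x̃ ≪ 1`, one has
`ρ((I − X(z̃)) D_f⁻¹ B_f) = 1`. -/
theorem siws_endemic_spectral_radius_one {n m : ℕ} (hn : 0 < n) (hm : 0 < m)
    (δ : Fin n → ℝ) (δw : Fin m → ℝ)
    (B : Matrix (Fin n) (Fin n) ℝ) (Bw : Matrix (Fin n) (Fin m) ℝ)
    (Cw : Matrix (Fin m) (Fin n) ℝ) (Aw : Matrix (Fin m) (Fin m) ℝ)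
    (hδ : ∀ i, 0 < δ i) (hδw : ∀ j, 0 < δw j)
    (hB : ∀ i j, 0 ≤ B i j) (hBw : ∀ i j, 0 ≤ Bw i j) (hCw : ∀ i j, 0 ≤ Cw i j)
    (hAw : ∀ i j, i ≠ j → 0 ≤ Aw i j)
    (hAwcol : ∀ j, ∑ i, Aw i j = 0)
    (hirr : MatIrred (BfM B Bw Cw Aw))
    (zt : Fin n ⊕ Fin m → ℝ)
    (hzt : ∀ i, 0 < zt i) (hxt : ∀ i : Fin n, zt (Sum.inl i) < 1)
    (heq : (-(DfM δ δw Aw) +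
      ((1 : Matrix (Fin n ⊕ Fin m) (Fin n ⊕ Fin m) ℝ) - XzM zt) * BfM B Bw Cw Aw) *ᵥ zt = 0) :
    specRad (((1 : Matrix (Fin n ⊕ Fin m) (Fin n ⊕ Fin m) ℝ) - XzM zt) *
      ((DfM δ δw Aw)⁻¹ * BfM B Bw Cw Aw)) = 1 := by
  haveI : Nonempty (Fin n ⊕ Fin m) := ⟨Sum.inl ⟨0, hn⟩⟩
  set d : Fin n ⊕ Fin m → ℝ := Sum.elim δ (fun j => δw j - Aw j j) with hd
  have hdpos : ∀ i, 0 < d i := by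
    rintro (a | b)
    · exact hδ a
    · have hdiag : Aw b b ≤ 0 := by
        have h := hAwcol b
        rw [← Finset.add_sum_erase _ _ (Finset.mem_univ b)] at h
        have hsum : 0 ≤ ∑ i ∈ Finset.univ.erase b, Aw i b :=
          Finset.sum_nonneg fun i hi => hAw i b (Finset.ne_of_mem_erase hi)
        linarith
      have := hδw b
      simp only [hd, Sum.elim_inr]
      linarith
  set e : Fin n ⊕ Fin m → ℝ :=
    fun i => 1 - Sum.elim (fun a => zt (Sum.inl a)) (fun _ => (0:ℝ)) i with he
  have hepos : ∀ i, 0 < e i := by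
    rintro (a | b)
    · have := hxt a
      simp only [he, Sum.elim_inl]
      linarith
    · simp [he]
  -- identify the diagonal matrices
  have hDf : DfM δ δw Aw = Matrix.diagonal d := by
    rw [DfM, Matrix.fromBlocks_diagonal]
  have hIX : (1 : Matrix (Fin n ⊕ Fin m) (Fin n ⊕ Fin m) ℝ) - XzM zt = Matrix.diagonal e := by
    rw [XzM, ← Matrix.diagonal_one, ← Matrix.diagonal_sub]
  have hDfinv : (DfM δ δw Aw)⁻¹ = Matrix.diagonal (fun i => (d i)⁻¹) := by
    rw [hDf]
    apply Matrix.inv_eq_right_inv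
    rw [Matrix.diagonal_mul_diagonal]
    have hfun : (fun i => d i * (d i)⁻¹) = fun _ => (1:ℝ) :=
      funext fun i => mul_inv_cancel₀ (hdpos i).ne'
    rw [hfun, Matrix.diagonal_one]
  -- nonnegativity of B_f
  have hBf : ∀ i j, 0 ≤ BfM B Bw Cw Aw i j := by
    rintro (a | a) (b | b)
    · exact hB a b
    · exact hBw a b
    · exact hCw a b
    · rcases eq_or_ne a b with rfl | hab
      · simp [BfM]
      · simpa [BfM, Matrix.diagonal_apply_ne _ hab] using hAw a b hab
  set T : Matrix (Fin n ⊕ Fin m) (Fin n ⊕ Fin m) ℝ :=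
    ((1 : Matrix (Fin n ⊕ Fin m) (Fin n ⊕ Fin m) ℝ) - XzM zt) *
      ((DfM δ δw Aw)⁻¹ * BfM B Bw Cw Aw) with hT
  have hTentry : ∀ i j, T i j = e i * ((d i)⁻¹ * BfM B Bw Cw Aw i j) := by
    intro i j
    rw [hT, hIX, hDfinv, Matrix.diagonal_mul, Matrix.diagonal_mul]
  have hTnn : ∀ i j, 0 ≤ T i j := by
    intro i j
    rw [hTentry]
    have := hdpos i
    have := hepos i
    have := hBf i j
    positivity
  -- the equilibrium equation componentwise
  have heqc : ∀ i, e i * (BfM B Bw Cw Aw *ᵥ zt) i = d i * zt i := by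
    intro i
    have := congrFun heq i
    rw [Matrix.add_mulVec, Matrix.neg_mulVec, hDf, hIX, ← Matrix.mulVec_mulVec] at this
    simp only [Pi.add_apply, Pi.neg_apply, Matrix.mulVec_diagonal, Pi.zero_apply] at this
    linarith
  -- T fixes zt
  have hTv : T *ᵥ zt = zt := by
    funext i
    have hTi : (T *ᵥ zt) i = e i * ((d i)⁻¹ * (BfM B Bw Cw Aw *ᵥ zt) i) := by
      rw [hT, hIX, hDfinv, ← Matrix.mulVec_mulVec, ← Matrix.mulVec_mulVec,
        Matrix.mulVec_diagonal, Matrix.mulVec_diagonal]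
    rw [hTi, mul_left_comm, heqc i, inv_mul_cancel_left₀ (hdpos i).ne']
  rw [specRad]
  exact aux_specRad_eq_one_of_pos_eigenvector T hTnn zt hzt hTv
end

section
/- Suppose Assumption 2 holds. Define T on {z ∈ ℝ^{n+m} : z ≥ 0} by T_i(z) = (D_f^{-1}B_f z)_i / (1 + (D_f^{-1}B_f z)_i) for i ∈ {1,…,n} and T_{n+j}(z) = (D_f^{-1}B_f z)_{n+j} (1 + z_{n+j}) / (1 + (D_f^{-1}B_f z)_{n+j}) for j ∈ {1,…,m}. Then T is monotone: if 0 ≤ z ≤ v componentwise, then T(z) ≤ T(v) componentwise. -/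
open Matrix

variable {n m : ℕ}

/-- The map `T` from the existence proof of the endemic equilibrium. -/
noncomputable def Tmap {n m : ℕ} (δ : Fin n → ℝ) (δw : Fin m → ℝ)
    (B : Matrix (Fin n) (Fin n) ℝ) (Bw : Matrix (Fin n) (Fin m) ℝ)
    (Cw : Matrix (Fin m) (Fin n) ℝ) (Aw : Matrix (Fin m) (Fin m) ℝ)
    (z : Fin n ⊕ Fin m → ℝ) : Fin n ⊕ Fin m → ℝ :=
  Sum.elim
    (fun a : Fin n =>
      (((DfM δ δw Aw)⁻¹ * BfM B Bw Cw Aw) *ᵥ z) (Sum.inl a) /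
        (1 + (((DfM δ δw Aw)⁻¹ * BfM B Bw Cw Aw) *ᵥ z) (Sum.inl a)))
    (fun b : Fin m =>
      (((DfM δ δw Aw)⁻¹ * BfM B Bw Cw Aw) *ᵥ z) (Sum.inr b) * (1 + z (Sum.inr b)) /
        (1 + (((DfM δ δw Aw)⁻¹ * BfM B Bw Cw Aw) *ᵥ z) (Sum.inr b)))

lemma scal1 {a b : ℝ} (ha : 0 ≤ a) (hab : a ≤ b) : a / (1 + a) ≤ b / (1 + b) := by
  have h1 : (0:ℝ) < 1 + a := by linarith
  have h2 : (0:ℝ) < 1 + b := by linarith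
  rw [div_le_div_iff₀ h1 h2]; nlinarith

lemma scal2 {a b w w' : ℝ} (ha : 0 ≤ a) (hab : a ≤ b) (hw : 0 ≤ w) (hww : w ≤ w') :
    a * (1 + w) / (1 + a) ≤ b * (1 + w') / (1 + b) := by
  have h1 : (0:ℝ) < 1 + a := by linarith
  have h2 : (0:ℝ) < 1 + b := by linarith
  rw [div_le_div_iff₀ h1 h2]
  nlinarith [mul_nonneg (sub_nonneg.2 hab) (sub_nonneg.2 hww), mul_nonneg ha (sub_nonneg.2 hww),
    mul_nonneg hw (sub_nonneg.2 hab), mul_nonneg (mul_nonneg ha (sub_nonneg.2 hab)) hw]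

/-- the map `T` is monotone on the nonnegative orthant. -/
theorem siws_Tmap_monotone {n m : ℕ} (hn : 0 < n) (hm : 0 < m)
    (δ : Fin n → ℝ) (δw : Fin m → ℝ)
    (B : Matrix (Fin n) (Fin n) ℝ) (Bw : Matrix (Fin n) (Fin m) ℝ)
    (Cw : Matrix (Fin m) (Fin n) ℝ) (Aw : Matrix (Fin m) (Fin m) ℝ)
    (hδ : ∀ i, 0 < δ i) (hδw : ∀ j, 0 < δw j)
    (hB : ∀ i j, 0 ≤ B i j) (hBw : ∀ i j, 0 ≤ Bw i j) (hCw : ∀ i j, 0 ≤ Cw i j)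
    (hAw : ∀ i j, i ≠ j → 0 ≤ Aw i j)
    (hAwcol : ∀ j, ∑ i, Aw i j = 0)
    (z v : Fin n ⊕ Fin m → ℝ)
    (hz : ∀ i, 0 ≤ z i) (hzv : ∀ i, z i ≤ v i) :
    ∀ i, Tmap δ δw B Bw Cw Aw z i ≤ Tmap δ δw B Bw Cw Aw v i := by
  set d : Fin n ⊕ Fin m → ℝ := Sum.elim δ (fun j => δw j - Aw j j) with hd
  have hdpos : ∀ i, 0 < d i := by
    rintro (a | b)
    · exact hδ a
    · have hAwd : Aw b b ≤ 0 := by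
        have := hAwcol b
        have hsum : ∑ i ∈ Finset.univ.erase b, Aw i b ≥ 0 :=
          Finset.sum_nonneg fun i hi => hAw i b (Finset.ne_of_mem_erase hi)
        rw [← Finset.sum_erase_add _ _ (Finset.mem_univ b)] at this
        linarith
      simp only [d, Sum.elim_inr]
      linarith [hδw b]
  have hDf : DfM δ δw Aw = Matrix.diagonal d := by
    ext (i | i) (j | j) <;>
      simp [DfM, Matrix.fromBlocks, Matrix.diagonal, d, Sum.elim_inl, Sum.elim_inr] <;>
      aesop
  have hBf : ∀ i j, 0 ≤ BfM B Bw Cw Aw i j := by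
    rintro (a | a) (b | b) <;>
      simp [BfM, Matrix.fromBlocks, Matrix.diagonal]
    · exact hB a b
    · exact hBw a b
    · exact hCw a b
    · rcases eq_or_ne a b with h | h
      · subst h; simp
      · simp [h]; exact hAw a b h
  set M := (DfM δ δw Aw)⁻¹ * BfM B Bw Cw Aw with hM
  have hMnn : ∀ i j, 0 ≤ M i j := by
    intro i j
    have hinv : (DfM δ δw Aw)⁻¹ = Matrix.diagonal (fun i => (d i)⁻¹) := by
      rw [hDf]
      apply Matrix.inv_eq_right_inv
      rw [Matrix.diagonal_mul_diagonal]
      have he : (fun i => d i * (d i)⁻¹) = fun _ => (1:ℝ) :=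
        funext fun i => mul_inv_cancel₀ (hdpos i).ne'
      rw [he, Matrix.diagonal_one]
    rw [hM, hinv, Matrix.diagonal_mul]
    exact mul_nonneg (inv_nonneg.mpr (hdpos i).le) (hBf i j)
  have hMz : ∀ i, 0 ≤ (M *ᵥ z) i := by
    intro i
    rw [Matrix.mulVec, dotProduct]
    exact Finset.sum_nonneg fun j _ => mul_nonneg (hMnn i j) (hz j)
  have hMzv : ∀ i, (M *ᵥ z) i ≤ (M *ᵥ v) i := by
    intro i
    rw [Matrix.mulVec, Matrix.mulVec, dotProduct, dotProduct]
    exact Finset.sum_le_sum fun j _ => mul_le_mul_of_nonneg_left (hzv j) (hMnn i j)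
  rintro (a | b)
  · simpa [Tmap] using scal1 (hMz (Sum.inl a)) (hMzv (Sum.inl a))
  · simpa [Tmap] using
      scal2 (hMz (Sum.inr b)) (hMzv (Sum.inr b)) (hz (Sum.inr b)) (hzv (Sum.inr b))
end

section
/- Suppose Assumption 2 holds. Let x̃ ∈ ℝ^n satisfy 0 ≪ x̃ ≪ 1 and (−D + (I − diag(x̃)) B) x̃ = 0 (x̃ is an endemic equilibrium of the networked SIS model). If z = (x, w) is a solution of the layered networked SIWS model with x_i(0) ∈ [0,1] for all i, w_j(0) ≥ 0 for all j, and x(0) ≥ x̃ componentwise, then x(t) ≥ x̃ componentwise for all t ≥ 0. -/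
open Matrix

variable {n m : ℕ}

/- ===================== auxiliary material ===================== -/

lemma field_inl (δ : Fin n → ℝ) (δw : Fin m → ℝ)
    (B : Matrix (Fin n) (Fin n) ℝ) (Bw : Matrix (Fin n) (Fin m) ℝ)
    (Cw : Matrix (Fin m) (Fin n) ℝ) (Aw : Matrix (Fin m) (Fin m) ℝ)
    (v : Fin n ⊕ Fin m → ℝ) (a : Fin n) :
    ((-(DfM δ δw Aw) +
      ((1 : Matrix (Fin n ⊕ Fin m) (Fin n ⊕ Fin m) ℝ) - XzM v) * BfM B Bw Cw Aw) *ᵥ v) (Sum.inl a)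
    = -(δ a * v (Sum.inl a)) + (1 - v (Sum.inl a)) *
        ((∑ b, B a b * v (Sum.inl b)) + ∑ j, Bw a j * v (Sum.inr j)) := by
  simp [DfM, XzM, BfM, Matrix.mulVec, Matrix.mul_apply, dotProduct, Fintype.sum_sum_type,
    Matrix.fromBlocks, Matrix.diagonal, Matrix.one_apply, Finset.mul_sum, Finset.sum_sub_distrib,
    mul_comm, mul_assoc, mul_left_comm, sub_mul, add_mul, Finset.sum_ite_eq, Finset.sum_ite_eq',
    Finset.sum_add_distrib, neg_sub, sub_eq_add_neg, neg_neg, neg_add_rev, neg_zero]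
  simp only [mul_add, Finset.mul_sum]
  simp only [mul_comm, mul_left_comm, mul_assoc]
  abel

lemma field_inr (δ : Fin n → ℝ) (δw : Fin m → ℝ)
    (B : Matrix (Fin n) (Fin n) ℝ) (Bw : Matrix (Fin n) (Fin m) ℝ)
    (Cw : Matrix (Fin m) (Fin n) ℝ) (Aw : Matrix (Fin m) (Fin m) ℝ)
    (v : Fin n ⊕ Fin m → ℝ) (b : Fin m) :
    ((-(DfM δ δw Aw) +
      ((1 : Matrix (Fin n ⊕ Fin m) (Fin n ⊕ Fin m) ℝ) - XzM v) * BfM B Bw Cw Aw) *ᵥ v) (Sum.inr b)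
    = -((δw b - Aw b b) * v (Sum.inr b)) + ((∑ c, Cw b c * v (Sum.inl c))
        + ∑ j, (Aw b j - if b = j then Aw b b else 0) * v (Sum.inr j)) := by
  simp [DfM, XzM, BfM, Matrix.mulVec, Matrix.mul_apply, dotProduct, Fintype.sum_sum_type,
    Matrix.fromBlocks, Matrix.diagonal, Matrix.one_apply, Finset.mul_sum, Finset.sum_sub_distrib,
    mul_comm, mul_assoc, mul_left_comm, sub_mul, add_mul, Finset.sum_ite_eq, Finset.sum_ite_eq',
    Finset.sum_add_distrib, neg_sub, sub_eq_add_neg, neg_neg, neg_add_rev, neg_zero]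
  abel

/-- The quasimonotonicity constant. -/
noncomputable def Kc (δw : Fin m → ℝ) (B : Matrix (Fin n) (Fin n) ℝ)
    (Bw : Matrix (Fin n) (Fin m) ℝ) (Cw : Matrix (Fin m) (Fin n) ℝ)
    (Aw : Matrix (Fin m) (Fin m) ℝ) : ℝ :=
  1 + (∑ a, 2 * ((∑ b, B a b) + ∑ j, Bw a j))
    + ∑ b, (|δw b - Aw b b| + (∑ c, Cw b c) + ∑ j, |Aw b j|)

lemma Kc_ge_one (δw : Fin m → ℝ) (B : Matrix (Fin n) (Fin n) ℝ)
    (Bw : Matrix (Fin n) (Fin m) ℝ) (Cw : Matrix (Fin m) (Fin n) ℝ)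
    (Aw : Matrix (Fin m) (Fin m) ℝ)
    (hB : ∀ i j, 0 ≤ B i j) (hBw : ∀ i j, 0 ≤ Bw i j) (hCw : ∀ i j, 0 ≤ Cw i j) :
    1 ≤ Kc δw B Bw Cw Aw := by
  have hsum1 : ∀ a : Fin n, 0 ≤ 2 * ((∑ b, B a b) + ∑ j, Bw a j) := by
    intro a
    have g1 : 0 ≤ ∑ b, B a b := Finset.sum_nonneg fun b _ => hB a b
    have g2 : 0 ≤ ∑ j, Bw a j := Finset.sum_nonneg fun j _ => hBw a j
    linarith
  have hsum2 : ∀ b : Fin m, 0 ≤ |δw b - Aw b b| + (∑ c, Cw b c) + ∑ j, |Aw b j| := by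
    intro b
    have g1 : 0 ≤ ∑ c, Cw b c := Finset.sum_nonneg fun c _ => hCw b c
    have g2 : 0 ≤ ∑ j, |Aw b j| := Finset.sum_nonneg fun j _ => abs_nonneg _
    have g3 := abs_nonneg (δw b - Aw b b)
    linarith
  have h1 : 0 ≤ ∑ a, 2 * ((∑ b, B a b) + ∑ j, Bw a j) :=
    Finset.sum_nonneg fun a _ => hsum1 a
  have h2 : 0 ≤ ∑ b, (|δw b - Aw b b| + (∑ c, Cw b c) + ∑ j, |Aw b j|) :=
    Finset.sum_nonneg fun b _ => hsum2 b
  unfold Kc; linarith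

/-- Key quasimonotonicity estimate for the SIWS vector field. -/
lemma quasimono (δ : Fin n → ℝ) (δw : Fin m → ℝ)
    (B : Matrix (Fin n) (Fin n) ℝ) (Bw : Matrix (Fin n) (Fin m) ℝ)
    (Cw : Matrix (Fin m) (Fin n) ℝ) (Aw : Matrix (Fin m) (Fin m) ℝ)
    (hδ : ∀ i, 0 < δ i)
    (hB : ∀ i j, 0 ≤ B i j) (hBw : ∀ i j, 0 ≤ Bw i j) (hCw : ∀ i j, 0 ≤ Cw i j)
    (hAw : ∀ i j, i ≠ j → 0 ≤ Aw i j)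
    (xt : Fin n → ℝ) (hxt : ∀ i, 0 < xt i ∧ xt i < 1)
    (heq : ∀ a, -(δ a * xt a) + (1 - xt a) * ∑ b, B a b * xt b = 0)
    (θ : ℝ) (hθ : 0 < θ) (hθ1 : θ ≤ 1)
    (v : Fin n ⊕ Fin m → ℝ)
    (hall : ∀ j, -θ ≤ v j - Sum.elim xt (fun _ => (0:ℝ)) j)
    (i : Fin n ⊕ Fin m) (hvi : v i - Sum.elim xt (fun _ => (0:ℝ)) i = -θ) :
    -((Kc δw B Bw Cw Aw) - 1) * θ ≤
      ((-(DfM δ δw Aw) +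
        ((1 : Matrix (Fin n ⊕ Fin m) (Fin n ⊕ Fin m) ℝ) - XzM v) * BfM B Bw Cw Aw) *ᵥ v) i := by
  have hsum1 : ∀ a : Fin n, 0 ≤ 2 * ((∑ b, B a b) + ∑ j, Bw a j) := by
    intro a
    have g1 : 0 ≤ ∑ b, B a b := Finset.sum_nonneg fun b _ => hB a b
    have g2 : 0 ≤ ∑ j, Bw a j := Finset.sum_nonneg fun j _ => hBw a j
    linarith
  have hsum2 : ∀ b : Fin m, 0 ≤ |δw b - Aw b b| + (∑ c, Cw b c) + ∑ j, |Aw b j| := by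
    intro b
    have g1 : 0 ≤ ∑ c, Cw b c := Finset.sum_nonneg fun c _ => hCw b c
    have g2 : 0 ≤ ∑ j, |Aw b j| := Finset.sum_nonneg fun j _ => abs_nonneg _
    have g3 := abs_nonneg (δw b - Aw b b)
    linarith
  have h1 : 0 ≤ ∑ a, 2 * ((∑ b, B a b) + ∑ j, Bw a j) :=
    Finset.sum_nonneg fun a _ => hsum1 a
  have h2 : 0 ≤ ∑ b, (|δw b - Aw b b| + (∑ c, Cw b c) + ∑ j, |Aw b j|) :=
    Finset.sum_nonneg fun b _ => hsum2 b
  cases i with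
  | inl a =>
    rw [field_inl]
    have hva : v (Sum.inl a) = xt a - θ := by
      have := hvi; simp only [Sum.elim_inl] at this; linarith
    have hKb : 2 * ((∑ b, B a b) + ∑ j, Bw a j) ≤ Kc δw B Bw Cw Aw - 1 := by
      have := Finset.single_le_sum (f := fun a => 2 * ((∑ b, B a b) + ∑ j, Bw a j))
        (fun a _ => hsum1 a) (Finset.mem_univ a)
      unfold Kc; linarith
    set S1 := ∑ b, B a b * v (Sum.inl b) with hS1def
    set S2 := ∑ j, Bw a j * v (Sum.inr j) with hS2def
    set St := ∑ b, B a b * xt b with hStdef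
    set RB := ∑ b, B a b with hRBdef
    set RW := ∑ j, Bw a j with hRWdef
    have hSt : 0 ≤ St := Finset.sum_nonneg fun b _ => mul_nonneg (hB a b) (hxt b).1.le
    have hRB : 0 ≤ RB := Finset.sum_nonneg fun b _ => hB a b
    have hRW : 0 ≤ RW := Finset.sum_nonneg fun j _ => hBw a j
    have hS1 : St - RB * θ ≤ S1 := by
      have step : ∀ b ∈ Finset.univ, B a b * xt b - B a b * θ ≤ B a b * v (Sum.inl b) := by
        intro b _
        have h := hall (Sum.inl b); simp only [Sum.elim_inl] at h
        nlinarith [hB a b]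
      calc St - RB * θ = ∑ b, (B a b * xt b - B a b * θ) := by
            rw [Finset.sum_sub_distrib, ← Finset.sum_mul]
        _ ≤ S1 := Finset.sum_le_sum step
    have hS2 : -(RW * θ) ≤ S2 := by
      have step : ∀ j ∈ Finset.univ, -(Bw a j * θ) ≤ Bw a j * v (Sum.inr j) := by
        intro j _
        have h := hall (Sum.inr j); simp only [Sum.elim_inr, sub_zero] at h
        nlinarith [hBw a j]
      calc -(RW * θ) = ∑ j, -(Bw a j * θ) := by
            rw [hRWdef, Finset.sum_mul, Finset.sum_neg_distrib]
        _ ≤ S2 := Finset.sum_le_sum step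
    have heqa := heq a
    have hx1 := (hxt a).1
    have hx2 := (hxt a).2
    rw [hva]
    have hfac : (0:ℝ) ≤ 1 - (xt a - θ) := by linarith
    have hprod : 0 ≤ (1 - (xt a - θ)) * ((S1 + S2) - (St - (RB + RW) * θ)) :=
      mul_nonneg hfac (by linarith)
    have hprod2 : 0 ≤ (RB + RW) * θ * (2 - (1 - (xt a - θ))) :=
      mul_nonneg (mul_nonneg (by linarith) hθ.le) (by linarith)
    nlinarith [mul_nonneg hθ.le hSt, mul_pos (hδ a) hθ,
      mul_nonneg (sub_nonneg.2 hKb) hθ.le]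
  | inr b =>
    rw [field_inr]
    have hvb : v (Sum.inr b) = -θ := by
      have := hvi; simp only [Sum.elim_inr, sub_zero] at this; linarith
    have hKb : |δw b - Aw b b| + (∑ c, Cw b c) + ∑ j, |Aw b j| ≤ Kc δw B Bw Cw Aw - 1 := by
      have := Finset.single_le_sum
        (f := fun b => |δw b - Aw b b| + (∑ c, Cw b c) + ∑ j, |Aw b j|)
        (fun b _ => hsum2 b) (Finset.mem_univ b)
      unfold Kc; linarith
    have hC : -((∑ c, Cw b c) * θ) ≤ ∑ c, Cw b c * v (Sum.inl c) := by
      have step : ∀ c ∈ Finset.univ, -(Cw b c * θ) ≤ Cw b c * v (Sum.inl c) := by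
        intro c _
        have h := hall (Sum.inl c); simp only [Sum.elim_inl] at h
        nlinarith [hCw b c, (hxt c).1]
      calc -((∑ c, Cw b c) * θ) = ∑ c, -(Cw b c * θ) := by
            rw [Finset.sum_mul, Finset.sum_neg_distrib]
        _ ≤ _ := Finset.sum_le_sum step
    have hA : -((∑ j, |Aw b j|) * θ) ≤
        ∑ j, (Aw b j - if b = j then Aw b b else 0) * v (Sum.inr j) := by
      have step : ∀ j ∈ Finset.univ,
          -(|Aw b j| * θ) ≤ (Aw b j - if b = j then Aw b b else 0) * v (Sum.inr j) := by
        intro j _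
        by_cases hbj : b = j
        · subst hbj
          have e : Aw b b - (if b = b then Aw b b else 0) = 0 := by simp
          rw [e, zero_mul]
          nlinarith [abs_nonneg (Aw b b)]
        · simp only [if_neg hbj]
          have h := hall (Sum.inr j); simp only [Sum.elim_inr, sub_zero] at h
          have hAnn : 0 ≤ Aw b j := hAw b j hbj
          nlinarith [le_abs_self (Aw b j)]
      calc -((∑ j, |Aw b j|) * θ) = ∑ j, -(|Aw b j| * θ) := by
            rw [Finset.sum_mul, Finset.sum_neg_distrib]
        _ ≤ _ := Finset.sum_le_sum step
    have hD : -(|δw b - Aw b b| * θ) ≤ -((δw b - Aw b b) * v (Sum.inr b)) := by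
      rw [hvb]
      nlinarith [neg_abs_le (δw b - Aw b b), le_abs_self (δw b - Aw b b)]
    nlinarith [mul_nonneg (sub_nonneg.2 hKb) hθ.le]

/-- the region `{x ≥ x̃}` (intersected with `𝒟`) is positively invariant
for the SIWS dynamics, where `x̃` is the SIS endemic equilibrium. -/
theorem siws_above_sis_equilibrium_invariant {n m : ℕ} (hn : 0 < n) (hm : 0 < m)
    (δ : Fin n → ℝ) (δw : Fin m → ℝ)
    (B : Matrix (Fin n) (Fin n) ℝ) (Bw : Matrix (Fin n) (Fin m) ℝ)
    (Cw : Matrix (Fin m) (Fin n) ℝ) (Aw : Matrix (Fin m) (Fin m) ℝ)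
    (hδ : ∀ i, 0 < δ i) (hδw : ∀ j, 0 < δw j)
    (hB : ∀ i j, 0 ≤ B i j) (hBw : ∀ i j, 0 ≤ Bw i j) (hCw : ∀ i j, 0 ≤ Cw i j)
    (hAw : ∀ i j, i ≠ j → 0 ≤ Aw i j)
    (hAwcol : ∀ j, ∑ i, Aw i j = 0)
    (xt : Fin n → ℝ)
    (hxt : ∀ i, 0 < xt i ∧ xt i < 1)
    (heqxt : (-(Matrix.diagonal δ) +
      ((1 : Matrix (Fin n) (Fin n) ℝ) - Matrix.diagonal xt) * B) *ᵥ xt = 0)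
    (z : ℝ → (Fin n ⊕ Fin m) → ℝ) (hdiff : Differentiable ℝ z)
    (hode : ∀ t : ℝ, 0 ≤ t →
      HasDerivAt z
        ((-(DfM δ δw Aw) +
          ((1 : Matrix (Fin n ⊕ Fin m) (Fin n ⊕ Fin m) ℝ) - XzM (z t)) * BfM B Bw Cw Aw) *ᵥ z t) t)
    (hx0 : ∀ i : Fin n, z 0 (Sum.inl i) ∈ Set.Icc (0:ℝ) 1)
    (hw0 : ∀ j : Fin m, 0 ≤ z 0 (Sum.inr j))
    (hge0 : ∀ i : Fin n, xt i ≤ z 0 (Sum.inl i)) :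
    ∀ t : ℝ, 0 ≤ t → ∀ i : Fin n, xt i ≤ z t (Sum.inl i) := by
  -- componentwise equilibrium equation
  have heq : ∀ a, -(δ a * xt a) + (1 - xt a) * ∑ b, B a b * xt b = 0 := by
    intro a
    have h := congrFun heqxt a
    rw [Matrix.add_mulVec, Matrix.neg_mulVec, ← Matrix.mulVec_mulVec, Matrix.sub_mulVec,
      Matrix.one_mulVec] at h
    simp only [Pi.add_apply, Pi.neg_apply, Pi.sub_apply, Matrix.mulVec_diagonal] at h
    have hBxt : (B *ᵥ xt) a = ∑ b, B a b * xt b := by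
      simp [Matrix.mulVec, dotProduct]
    rw [hBxt] at h
    simp only [Pi.zero_apply] at h
    linear_combination h
  set K := Kc δw B Bw Cw Aw with hKdef
  have hK1 : 1 ≤ K := Kc_ge_one δw B Bw Cw Aw hB hBw hCw
  set c : Fin n ⊕ Fin m → ℝ := Sum.elim xt (fun _ => (0:ℝ)) with hcdef
  have hc0 : ∀ j, 0 ≤ z 0 j - c j := by
    intro j
    cases j with
    | inl a => simp only [hcdef, Sum.elim_inl]; linarith [hge0 a]
    | inr b => simp only [hcdef, Sum.elim_inr]; linarith [hw0 b]
  intro t0 ht0 i0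
  by_contra hcon
  push_neg at hcon
  set η := xt i0 - z t0 (Sum.inl i0) with hηdef
  have hη : 0 < η := by linarith
  set ε := min (Real.exp (-(K * t0))) (η * Real.exp (-(K * t0))) with hεdef
  have hεpos : 0 < ε := lt_min (Real.exp_pos _) (mul_pos hη (Real.exp_pos _))
  -- the "bad" set
  set S : Set ℝ := {t | t ∈ Set.Icc 0 t0 ∧ ∃ j, z t j - c j ≤ -(ε * Real.exp (K * t))}
    with hSdef
  have hzc : Continuous z := hdiff.continuous
  have hcomp : ∀ j, Continuous fun t => z t j - c j + ε * Real.exp (K * t) := by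
    intro j
    exact (((continuous_apply j).comp hzc).sub continuous_const).add
      (continuous_const.mul ((Real.continuous_exp.comp (continuous_const.mul continuous_id))))
  have hSclosed : IsClosed S := by
    have : S = Set.Icc 0 t0 ∩
        ⋃ j, {t | z t j - c j + ε * Real.exp (K * t) ≤ 0} := by
      ext t
      simp only [hSdef, Set.mem_setOf_eq, Set.mem_inter_iff, Set.mem_iUnion]
      constructor
      · rintro ⟨h1, j, h2⟩; exact ⟨h1, j, by linarith⟩
      · rintro ⟨h1, j, h2⟩; exact ⟨h1, j, by linarith⟩
    rw [this]
    exact isClosed_Icc.inter (isClosed_iUnion_of_finite fun j =>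
      isClosed_le (by fun_prop) continuous_const)
  have hSne : S.Nonempty := by
    refine ⟨t0, ⟨⟨ht0, le_refl t0⟩, Sum.inl i0, ?_⟩⟩
    have h1 : ε * Real.exp (K * t0) ≤ η := by
      have h2 : ε ≤ η * Real.exp (-(K * t0)) := min_le_right _ _
      have h3 : 0 < Real.exp (K * t0) := Real.exp_pos _
      have h4 : Real.exp (-(K * t0)) * Real.exp (K * t0) = 1 := by
        rw [← Real.exp_add]; simp
      nlinarith
    simp only [hcdef, Sum.elim_inl]
    linarith
  have hSbdd : BddBelow S := ⟨0, fun t ht => ht.1.1⟩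
  set s := sInf S with hsdef
  have hsS : s ∈ S := hSclosed.csInf_mem hSne hSbdd
  have hs0 : 0 ≤ s := hsS.1.1
  have hst0 : s ≤ t0 := hsS.1.2
  have hspos : 0 < s := by
    rcases lt_or_eq_of_le hs0 with h | h
    · exact h
    · exfalso
      obtain ⟨j, hj⟩ := hsS.2
      rw [← h] at hj
      have := hc0 j
      have : 0 < ε * Real.exp (K * 0) := by positivity
      linarith
  have hmin : ∀ t, 0 ≤ t → t < s → ∀ j, -(ε * Real.exp (K * t)) < z t j - c j := by
    intro t ht hts j
    by_contra hle
    push_neg at hle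
    have : t ∈ S := ⟨⟨ht, le_trans hts.le hst0⟩, j, hle⟩
    exact absurd (csInf_le hSbdd this) (not_le.2 hts)
  -- continuity: all coordinates are ≥ -θ at time s
  have hneBot : (nhdsWithin s (Set.Ico 0 s)).NeBot := by
    rw [← mem_closure_iff_nhdsWithin_neBot, closure_Ico (ne_of_lt hspos)]
    exact ⟨hs0, le_refl s⟩
  set θ := ε * Real.exp (K * s) with hθdef
  have hθpos : 0 < θ := by positivity
  have hθ1 : θ ≤ 1 := by
    have h2 : ε ≤ Real.exp (-(K * t0)) := min_le_left _ _
    have h3 : Real.exp (K * s) ≤ Real.exp (K * t0) := by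
      apply Real.exp_le_exp.2
      nlinarith
    have h4 : Real.exp (-(K * t0)) * Real.exp (K * t0) = 1 := by
      rw [← Real.exp_add]; simp
    nlinarith [Real.exp_pos (K * s), Real.exp_pos (K * t0), Real.exp_pos (-(K * t0))]
  have hall : ∀ j, -θ ≤ z s j - c j := by
    intro j
    have htd : Filter.Tendsto (fun t => z t j - c j + ε * Real.exp (K * t))
        (nhdsWithin s (Set.Ico 0 s)) (nhds (z s j - c j + ε * Real.exp (K * s))) :=
      ((hcomp j).continuousAt.continuousWithinAt).tendsto
    have hev : ∀ᶠ t in nhdsWithin s (Set.Ico 0 s),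
        0 ≤ z t j - c j + ε * Real.exp (K * t) :=
      eventually_nhdsWithin_of_forall fun t ht => by
        have := hmin t ht.1 ht.2 j; linarith
    have := ge_of_tendsto htd hev
    simp only [hθdef]
    linarith
  obtain ⟨j0, hj0⟩ := hsS.2
  have hj0eq : z s j0 - c j0 = -θ := le_antisymm hj0 (hall j0)
  -- the derivative of h t = z t j0 - c j0 + ε exp(K t) at s
  have hz' : HasDerivAt (fun t => z t j0)
      (((-(DfM δ δw Aw) +
        ((1 : Matrix (Fin n ⊕ Fin m) (Fin n ⊕ Fin m) ℝ) - XzM (z s)) * BfM B Bw Cw Aw) *ᵥ z s) j0)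
      s := hasDerivAt_pi.1 (hode s hspos.le) j0
  have hexp : HasDerivAt (fun t => ε * Real.exp (K * t))
      (ε * (Real.exp (K * s) * K)) s := by
    have h1 : HasDerivAt (fun t : ℝ => K * t) K s := by
      simpa using (hasDerivAt_id s).const_mul K
    exact ((Real.hasDerivAt_exp (K * s)).comp s h1).const_mul ε
  set Fj : ℝ := ((-(DfM δ δw Aw) +
      ((1 : Matrix (Fin n ⊕ Fin m) (Fin n ⊕ Fin m) ℝ) - XzM (z s)) * BfM B Bw Cw Aw) *ᵥ z s) j0
    with hFjdef
  have hd : HasDerivAt (fun t => z t j0 - c j0 + ε * Real.exp (K * t))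
      (Fj + ε * (Real.exp (K * s) * K)) s := (hz'.sub_const (c j0)).add hexp
  -- left slope is nonpositive
  have hslope := hasDerivAt_iff_tendsto_slope.1 hd
  have hmono : nhdsWithin s (Set.Ico 0 s) ≤ nhdsWithin s {s}ᶜ :=
    nhdsWithin_mono s (fun t ht => ne_of_lt ht.2)
  have htd2 : Filter.Tendsto (slope (fun t => z t j0 - c j0 + ε * Real.exp (K * t)) s)
      (nhdsWithin s (Set.Ico 0 s)) (nhds (Fj + ε * (Real.exp (K * s) * K))) :=
    hslope.mono_left hmono
  have hle0 : Fj + ε * (Real.exp (K * s) * K) ≤ 0 := by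
    apply le_of_tendsto htd2
    apply eventually_nhdsWithin_of_forall
    intro t ht
    rw [slope_def_field]
    apply div_nonpos_of_nonneg_of_nonpos
    · have h1 := hmin t ht.1 ht.2 j0
      have h2 : z s j0 - c j0 + ε * Real.exp (K * s) = 0 := by
        rw [hj0eq, hθdef]; ring
      linarith
    · linarith [ht.2]
  -- quasimonotonicity lower bound
  have hqm : -(K - 1) * θ ≤ Fj := by
    rw [hFjdef, hKdef]
    exact quasimono δ δw B Bw Cw Aw hδ hB hBw hCw hAw xt hxt heq θ hθpos hθ1 (z s)
      (fun j => hall j) j0 hj0eq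
  have hcontr : 0 < Fj + ε * (Real.exp (K * s) * K) := by
    have : ε * (Real.exp (K * s) * K) = θ * K := by rw [hθdef]; ring
    rw [this]
    nlinarith
  linarith
end
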